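/- arXiv:2101.09480 — 8 statements merged into one kernel-verified Lean document; each statement's English description precedes it below -/
import Mathlib

section
/- For every x ≠ 0, every t ∈ ℝ, and every v ∈ N_x, one has ‖ψ*_t(x)v‖ ≤ ‖exp(tA)‖·‖exp(−tA)‖·‖v‖. Consequently, for every τ > 0 there is a constant C_τ < ∞ (e.g. C_τ = sup_{|t| ≤ τ} ‖exp(tA)‖·‖exp(−tA)‖) such that ‖ψ*_t(x)v‖ ≤ C_τ·‖v‖ for all |t| ≤ τ, all x ≠ 0 and all v ∈ N_x; i.e., the scaled linear Poincaré flow is a bounded cocycle. -/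
open NormedSpace

/-- The scaled linear Poincaré flow of the linear flow `φ_t = exp (t • A)` in the linear
model of a hyperbolic singularity: for `x ≠ 0` and `v` in the normal space
`N_x = (ℝ ∙ A x)ᗮ`, `ψ*_t(x) v = (‖Ax‖/‖A φ_t x‖) • π_{φ_t x} (exp (t • A) v)`, where
`π_y` is the orthogonal projection onto `(ℝ ∙ A y)ᗮ`. -/
noncomputable def scaledLPF {d : ℕ}
    (A : EuclideanSpace ℝ (Fin d) →L[ℝ] EuclideanSpace ℝ (Fin d))
    (t : ℝ) (x v : EuclideanSpace ℝ (Fin d)) : EuclideanSpace ℝ (Fin d) :=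
  (‖A x‖ / ‖A (exp (t • A) x)‖) •
    ((Submodule.orthogonalProjectionOnto (ℝ ∙ (A (exp (t • A) x)))ᗮ (exp (t • A) v) :
      EuclideanSpace ℝ (Fin d)))

/-! Since `A` commutes with `exp (t • A)`, we have `A x = exp (-t • A) (A (φ_t x))`, so the scaling
factor `‖A x‖ / ‖A (φ_t x)‖` is at most `‖exp (-t • A)‖`, while the orthogonal projection does not
increase norms. The uniform bound for `|t| ≤ τ` then comes from continuity of
`t ↦ ‖exp (t • A)‖ * ‖exp (-t • A)‖` on the compact interval `[-τ, τ]`. -/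

section BanachAlgebra

variable {𝔸 : Type*} [NormedRing 𝔸] [NormedAlgebra ℝ 𝔸] [CompleteSpace 𝔸]

theorem exp_neg_smul_mul_mul_exp_smul (a : 𝔸) (t : ℝ) :
    exp ((-t) • a) * a * exp (t • a) = a := by
  -- the conjugation lemma is stated for `ℚ`-Banach algebras
  let := NormedAlgebra.restrictScalars ℚ ℝ 𝔸
  rw [neg_smul]
  exact ((Commute.refl a).smul_right t).exp_neg_mul_mul_exp_eq_self

theorem continuous_norm_exp_smul_mul_norm_exp_neg_smul (a : 𝔸) :
    Continuous fun t : ℝ => ‖exp (t • a)‖ * ‖exp ((-t) • a)‖ := by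
  have hexp : Continuous (exp : 𝔸 → 𝔸) :=
    continuous_iff_continuousAt.2 fun b => (exp_analytic (𝕂 := ℝ) b).continuousAt
  fun_prop

end BanachAlgebra

theorem ContinuousLinearMap.norm_apply_div_norm_apply_exp_smul_le {E : Type*}
    [NormedAddCommGroup E] [NormedSpace ℝ E] [CompleteSpace E] (A : E →L[ℝ] E) (t : ℝ) (x : E) :
    ‖A x‖ / ‖A (exp (t • A) x)‖ ≤ ‖exp ((-t) • A)‖ := by
  have hconj : exp ((-t) • A) (A (exp (t • A) x)) = A x :=
    congr($(exp_neg_smul_mul_mul_exp_smul A t) x)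
  simpa only [hconj] using (exp ((-t) • A)).ratio_le_opNorm (A (exp (t • A) x))

theorem norm_scaledLPF_le {d : ℕ} (A : EuclideanSpace ℝ (Fin d) →L[ℝ] EuclideanSpace ℝ (Fin d))
    (t : ℝ) (x v : EuclideanSpace ℝ (Fin d)) :
    ‖scaledLPF A t x v‖ ≤ ‖exp (t • A)‖ * ‖exp ((-t) • A)‖ * ‖v‖ := by
  rw [scaledLPF, norm_smul, Real.norm_of_nonneg (by positivity)]
  calc _ ≤ ‖exp ((-t) • A)‖ * (‖exp (t • A)‖ * ‖v‖) := by
        gcongr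
        · exact A.norm_apply_div_norm_apply_exp_smul_le t x
        · exact (Submodule.norm_orthogonalProjectionOnto_apply_le _ _).trans
            ((exp (t • A)).le_opNorm v)
    _ = _ := by ring

theorem scaledLPF_bounded_cocycle_general {d : ℕ}
    (A : EuclideanSpace ℝ (Fin d) →L[ℝ] EuclideanSpace ℝ (Fin d)) :
    (∀ x : EuclideanSpace ℝ (Fin d), x ≠ 0 → ∀ t : ℝ, ∀ v ∈ (ℝ ∙ (A x))ᗮ,
      ‖scaledLPF A t x v‖ ≤ ‖exp (t • A)‖ * ‖exp ((-t) • A)‖ * ‖v‖) ∧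
    (∀ τ : ℝ, 0 < τ → ∃ C : ℝ,
      (∀ t : ℝ, |t| ≤ τ → ‖exp (t • A)‖ * ‖exp ((-t) • A)‖ ≤ C) ∧
      ∀ t : ℝ, |t| ≤ τ → ∀ x : EuclideanSpace ℝ (Fin d), x ≠ 0 →
        ∀ v ∈ (ℝ ∙ (A x))ᗮ, ‖scaledLPF A t x v‖ ≤ C * ‖v‖) := by
  refine ⟨fun x _ t v _ => norm_scaledLPF_le A t x v, fun τ _ => ?_⟩
  obtain ⟨C, hC⟩ := (isCompact_Icc (a := -τ) (b := τ)).bddAbove_image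
    (continuous_norm_exp_smul_mul_norm_exp_neg_smul A).continuousOn
  have hbound : ∀ t : ℝ, |t| ≤ τ → ‖exp (t • A)‖ * ‖exp ((-t) • A)‖ ≤ C :=
    fun t ht => hC ⟨t, abs_le.mp ht, rfl⟩
  refine ⟨C, hbound, fun t ht x _ v _ => ?_⟩
  calc ‖scaledLPF A t x v‖ ≤ ‖exp (t • A)‖ * ‖exp ((-t) • A)‖ * ‖v‖ := norm_scaledLPF_le A t x v
    _ ≤ C * ‖v‖ := by gcongr; exact hbound t ht

/-- The scaled linear Poincaré flow is a bounded cocycle: for `x ≠ 0`, `t ∈ ℝ`, and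
`v ∈ N_x`, `‖ψ*_t(x) v‖ ≤ ‖exp(tA)‖·‖exp(−tA)‖·‖v‖`; consequently for every `τ > 0`
there is `C_τ` with `‖ψ*_t(x) v‖ ≤ C_τ·‖v‖` whenever `|t| ≤ τ`. -/
theorem scaledLPF_bounded_cocycle {d : ℕ}
    (A : EuclideanSpace ℝ (Fin d) →L[ℝ] EuclideanSpace ℝ (Fin d))
    (hA : Function.Bijective A) :
    (∀ x : EuclideanSpace ℝ (Fin d), x ≠ 0 → ∀ t : ℝ, ∀ v ∈ (ℝ ∙ (A x))ᗮ,
      ‖scaledLPF A t x v‖ ≤ ‖exp (t • A)‖ * ‖exp ((-t) • A)‖ * ‖v‖) ∧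
    (∀ τ : ℝ, 0 < τ → ∃ C : ℝ,
      (∀ t : ℝ, |t| ≤ τ → ‖exp (t • A)‖ * ‖exp ((-t) • A)‖ ≤ C) ∧
      ∀ t : ℝ, |t| ≤ τ → ∀ x : EuclideanSpace ℝ (Fin d), x ≠ 0 →
        ∀ v ∈ (ℝ ∙ (A x))ᗮ, ‖scaledLPF A t x v‖ ≤ C * ‖v‖) :=
  scaledLPF_bounded_cocycle_general A
end

section
/- For every α ∈ (0,1), setting T_α = (2·log C + 2·log(1/α))/(b − a), every x ∈ E ∖ {0} satisfies: the Lebesgue measure of the set {t ∈ ℝ : exp(tA)·x ∉ Dˢ_α ∪ Dᵘ_α} is at most T_α. (The time an orbit spends 'making the turn' between the stable cone and the unstable cone of a hyperbolic singularity is uniformly bounded, independently of the orbit.) -/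
/-!
Split `x = xˢ + xᵘ` along `Es ⊕ Esᗮ`; both summands stay in their invariant subspaces under the
flow, so the two cone coordinates of `exp (t • A) x` are `‖exp (t • A) xˢ‖` and
`‖exp (t • A) xᵘ‖`. Outside both cones their ratio lies in `[α, 1/α]`, while over a time `τ` the
hyperbolic estimates make the ratio `xᵘ/xˢ` grow by at least `C⁻² e^{(b - a) τ}`. Hence any two
turning times are at most `T_α` apart, and a subset of `ℝ` of diameter `T_α` has measure at most
`T_α`.
-/

open NormedSpace MeasureTheory

/-- The norm of the orthogonal projection of `x` onto the submodule `K`. -/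
noncomputable def projComp {d : ℕ} (K : Submodule ℝ (EuclideanSpace ℝ (Fin d)))
    (x : EuclideanSpace ℝ (Fin d)) : ℝ :=
  ‖(K.orthogonalProjectionOnto x : EuclideanSpace ℝ (Fin d))‖

theorem mem_eball_expSeries_radius {𝔸 : Type*} [NormedRing 𝔸] [NormedAlgebra ℝ 𝔸] (x : 𝔸) :
    x ∈ Metric.eball (0 : 𝔸) (expSeries ℝ 𝔸).radius :=
  (expSeries_radius_eq_top ℝ 𝔸).symm ▸ edist_lt_top _ _

namespace ContinuousLinearMap

variable {E : Type*} [NormedAddCommGroup E] [NormedSpace ℝ E] [CompleteSpace E]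

theorem exp_add_smul_apply (A : E →L[ℝ] E) (s t : ℝ) (v : E) :
    exp ((s + t) • A) v = exp (s • A) (exp (t • A) v) := by
  rw [add_smul, exp_add_of_commute_of_mem_ball (((Commute.refl A).smul_left s).smul_right t)
    (mem_eball_expSeries_radius _) (mem_eball_expSeries_radius _)]
  rfl

theorem exp_injective (A : E →L[ℝ] E) : Function.Injective ⇑(exp A) :=
  ((Module.End.isUnit_iff _).1 ((isUnit_exp_of_mem_ball (mem_eball_expSeries_radius A)).map
    toLinearMapRingHom)).1

theorem exp_apply_mem {A : E →L[ℝ] E} {K : Submodule ℝ E} (hK : IsClosed (K : Set E))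
    (hA : ∀ v ∈ K, A v ∈ K) {v : E} (hv : v ∈ K) : exp A v ∈ K := by
  have hpow (n : ℕ) : (A ^ n) v ∈ K := by
    rw [FunLike.coe_pow_eq_iterate]
    exact Set.MapsTo.iterate hA n hv
  have hsum := (exp_series_hasSum_exp' (𝕂 := ℝ) A).mapL (apply ℝ E v)
  exact hK.mem_of_tendsto hsum.tendsto_sum_nat
    (.of_forall fun s => K.sum_mem fun n _ => K.smul_mem _ (hpow n))

theorem exp_smul_apply_mem {A : E →L[ℝ] E} {K : Submodule ℝ E} (hK : IsClosed (K : Set E))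
    (hA : ∀ v ∈ K, A v ∈ K) (t : ℝ) {v : E} (hv : v ∈ K) : exp (t • A) v ∈ K :=
  exp_apply_mem hK (fun w hw => K.smul_mem t (hA w hw)) hv

end ContinuousLinearMap

theorem norm_pos_of_mul_norm_le {E : Type*} [NormedAddCommGroup E] {v w : E} {α : ℝ}
    (hvw : v + w ≠ 0) (hα : 0 < α) (h : α * ‖v‖ ≤ ‖w‖) : 0 < ‖w‖ := by
  refine (norm_nonneg w).lt_of_ne fun hw => hvw ?_
  have hv : ‖v‖ = 0 := le_antisymm (by nlinarith [norm_nonneg v]) (norm_nonneg v)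
  rw [norm_eq_zero.1 hv, norm_eq_zero.1 hw.symm, add_zero]

theorem projComp_add_of_mem_orthogonal {d : ℕ} {K : Submodule ℝ (EuclideanSpace ℝ (Fin d))}
    {v w : EuclideanSpace ℝ (Fin d)} (hv : v ∈ K) (hw : w ∈ Kᗮ) : projComp K (v + w) = ‖v‖ := by
  simp [projComp, Submodule.orthogonalProjectionOnto_apply_of_mem_orthogonal hw,
    Submodule.starProjection_eq_self_iff.2 hv]

theorem projComp_orthogonal_add_of_mem {d : ℕ} {K : Submodule ℝ (EuclideanSpace ℝ (Fin d))}
    {v w : EuclideanSpace ℝ (Fin d)} (hv : v ∈ K) (hw : w ∈ Kᗮ) : projComp Kᗮ (v + w) = ‖w‖ := by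
  rw [add_comm]
  exact projComp_add_of_mem_orthogonal hw (K.le_orthogonal_orthogonal hv)

theorem volume_le_of_forall_sub_le {S : Set ℝ} {T : ℝ}
    (h : ∀ s ∈ S, ∀ t ∈ S, s ≤ t → t - s ≤ T) : volume S ≤ ENNReal.ofReal T := by
  refine (Real.volume_le_diam S).trans (Metric.ediam_le fun s hs t ht => ?_)
  rw [edist_dist, Real.dist_eq]
  refine ENNReal.ofReal_le_ofReal ?_
  rcases le_total s t with hst | hst
  · rw [abs_sub_comm, abs_of_nonneg (sub_nonneg.2 hst)]; exact h s hs t ht hst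
  · rw [abs_of_nonneg (sub_nonneg.2 hst)]; exact h t ht s hs hst

theorem sub_mul_le_of_cone_bounds {C a b α τ s₁ u₁ s₂ u₂ : ℝ} (hC : 0 < C) (hα : 0 < α)
    (hu₁ : 0 < u₁) (h₁ : α * s₁ ≤ u₁) (h₂ : α * u₂ ≤ s₂)
    (hs : s₂ ≤ C * Real.exp (a * τ) * s₁) (hu : C⁻¹ * Real.exp (b * τ) * u₁ ≤ u₂) :
    (b - a) * τ ≤ 2 * Real.log C + 2 * Real.log (1 / α) := by
  have key : α ^ 2 * Real.exp (b * τ) ≤ C ^ 2 * Real.exp (a * τ) := by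
    refine le_of_mul_le_mul_right ?_ (by positivity : 0 < C⁻¹ * u₁)
    calc α ^ 2 * Real.exp (b * τ) * (C⁻¹ * u₁)
        = α * (α * (C⁻¹ * Real.exp (b * τ) * u₁)) := by ring
      _ ≤ α * s₂ := by gcongr; exact (mul_le_mul_of_nonneg_left hu hα.le).trans h₂
      _ ≤ α * (C * Real.exp (a * τ) * s₁) := by gcongr
      _ = C * Real.exp (a * τ) * (α * s₁) := by ring
      _ ≤ C * Real.exp (a * τ) * u₁ := by gcongr
      _ = C ^ 2 * Real.exp (a * τ) * (C⁻¹ * u₁) := by field_simp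
  have hlog := Real.log_le_log (by positivity) key
  rw [Real.log_mul (by positivity) (by positivity), Real.log_mul (by positivity) (by positivity),
    Real.log_exp, Real.log_exp, Real.log_pow, Real.log_pow] at hlog
  rw [one_div, Real.log_inv]
  push_cast at hlog
  linarith

theorem turning_time_bounded_general {d : ℕ}
    (A : EuclideanSpace ℝ (Fin d) →L[ℝ] EuclideanSpace ℝ (Fin d))
    (Es : Submodule ℝ (EuclideanSpace ℝ (Fin d)))
    (C a b : ℝ) (hC : 1 ≤ C) (ha : a < 0) (hb : 0 < b)
    (hinvs : ∀ v ∈ Es, A v ∈ Es) (hinvu : ∀ v ∈ Esᗮ, A v ∈ Esᗮ)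
    (hs : ∀ v ∈ Es, ∀ t : ℝ, 0 ≤ t → ‖exp (t • A) v‖ ≤ C * Real.exp (a * t) * ‖v‖)
    (hu : ∀ v ∈ Esᗮ, ∀ t : ℝ, 0 ≤ t →
      C⁻¹ * Real.exp (b * t) * ‖v‖ ≤ ‖exp (t • A) v‖)
    (α : ℝ) (hα : α ∈ Set.Ioo (0 : ℝ) 1)
    (x : EuclideanSpace ℝ (Fin d)) (hx : x ≠ 0) :
    volume {t : ℝ | ¬ (projComp Esᗮ (exp (t • A) x) < α * projComp Es (exp (t • A) x) ∨
        projComp Es (exp (t • A) x) < α * projComp Esᗮ (exp (t • A) x))} ≤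
      ENNReal.ofReal ((2 * Real.log C + 2 * Real.log (1 / α)) / (b - a)) := by
  set xs := Es.starProjection x
  set xu := Esᗮ.starProjection x
  have hxs (t : ℝ) : exp (t • A) xs ∈ Es :=
    ContinuousLinearMap.exp_smul_apply_mem Es.closed_of_finiteDimensional hinvs t (Es.starProjection_apply_mem x)
  have hxu (t : ℝ) : exp (t • A) xu ∈ Esᗮ :=
    ContinuousLinearMap.exp_smul_apply_mem Es.isClosed_orthogonal hinvu t (Esᗮ.starProjection_apply_mem x)
  have hsplit (t : ℝ) : exp (t • A) x = exp (t • A) xs + exp (t • A) xu := by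
    rw [← map_add, Es.starProjection_add_starProjection_orthogonal]
  refine volume_le_of_forall_sub_le fun t₁ h₁ t₂ h₂ h₁₂ => ?_
  simp only [Set.mem_ofPred_eq, not_or, not_lt, hsplit,
    projComp_add_of_mem_orthogonal (hxs _) (hxu _), projComp_orthogonal_add_of_mem (hxs _) (hxu _)]
    at h₁ h₂
  have hflow v : exp (t₂ • A) v = exp ((t₂ - t₁) • A) (exp (t₁ • A) v) := by
    rw [← ContinuousLinearMap.exp_add_smul_apply, sub_add_cancel]
  rw [le_div_iff₀ (by linarith), mul_comm]
  refine sub_mul_le_of_cone_bounds (by linarith) hα.1 ?_ h₁.1 h₂.2 ?_ ?_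
  · refine norm_pos_of_mul_norm_le ?_ hα.1 h₁.1
    rw [← hsplit]
    exact (map_ne_zero_iff _ (ContinuousLinearMap.exp_injective _)).2 hx
  · rw [hflow]; exact hs _ (hxs t₁) _ (sub_nonneg.2 h₁₂)
  · rw [hflow]; exact hu _ (hxu t₁) _ (sub_nonneg.2 h₁₂)

/-- Linear-model form of Lemma 3.2: for a hyperbolic linear flow `exp (t • A)` with
orthogonal invariant splitting `E = Es ⊕ Eu` (`Eu = Esᗮ`), rates `a < 0 < b` and
constant `C ≥ 1`, and for every `α ∈ (0,1)`, setting
`T_α = (2 log C + 2 log (1/α))/(b − a)`, every nonzero orbit spends at most time `T_α`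
outside the union of the cones `Dˢ_α = {xᵘ < α xˢ}` and `Dᵘ_α = {xˢ < α xᵘ}`. -/
theorem turning_time_bounded {d : ℕ}
    (A : EuclideanSpace ℝ (Fin d) →L[ℝ] EuclideanSpace ℝ (Fin d))
    (hA : Function.Bijective A)
    (Es : Submodule ℝ (EuclideanSpace ℝ (Fin d)))
    (C a b : ℝ) (hC : 1 ≤ C) (ha : a < 0) (hb : 0 < b)
    (hinvs : ∀ v ∈ Es, A v ∈ Es) (hinvu : ∀ v ∈ Esᗮ, A v ∈ Esᗮ)
    (hs : ∀ v ∈ Es, ∀ t : ℝ, 0 ≤ t → ‖exp (t • A) v‖ ≤ C * Real.exp (a * t) * ‖v‖)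
    (hu : ∀ v ∈ Esᗮ, ∀ t : ℝ, 0 ≤ t →
      C⁻¹ * Real.exp (b * t) * ‖v‖ ≤ ‖exp (t • A) v‖)
    (α : ℝ) (hα : α ∈ Set.Ioo (0 : ℝ) 1)
    (x : EuclideanSpace ℝ (Fin d)) (hx : x ≠ 0) :
    volume {t : ℝ | ¬ (projComp Esᗮ (exp (t • A) x) < α * projComp Es (exp (t • A) x) ∨
        projComp Es (exp (t • A) x) < α * projComp Esᗮ (exp (t • A) x))} ≤
      ENNReal.ofReal ((2 * Real.log C + 2 * Real.log (1 / α)) / (b - a)) :=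
  turning_time_bounded_general A Es C a b hC ha hb hinvs hinvu hs hu α hα x hx
end

section
/- Fix r > 0 and α ∈ (0,1). Let x_i ∈ E ∖ {0} be a sequence with x_i → 0, and suppose that for every i the entry time t_i⁻ = sup{t > 0 : exp(−sA)x_i ∈ closedBall(0,r) for all s ∈ [0,t]} and the exit time t_i⁺ = sup{t > 0 : exp(sA)x_i ∈ closedBall(0,r) for all s ∈ [0,t]} are finite. Then t_i⁻ + t_i⁺ → ∞, and the fraction of time the orbit spends in the two cones tends to one: (1/(t_i⁻ + t_i⁺)) · Leb{t ∈ (−t_i⁻, t_i⁺) : exp(tA)x_i ∈ Dˢ_α ∪ Dᵘ_α} → 1 as i → ∞. -/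
open NormedSpace MeasureTheory Filter

/-!
Write `F t = ‖P_Es φ_t x‖` and `G t = ‖P_Eu φ_t x‖`. Since `P_Es` and `P_Eu` commute with the
flow, `F` contracts at rate `a` and `G` expands at rate `b` along the orbit. If `t₁ ≤ t₂` are both
times outside `Dˢ_α ∪ Dᵘ_α`, then `α F ≤ G` at `t₁` and `α G ≤ F` at `t₂`, which forces
`α² e^{(b-a)(t₂-t₁)} ≤ C²`. So the times outside the cones have diameter at most
`log (C²/α²) / (b - a)`, a bound independent of `x`. By continuity of the flow on compact time
intervals, the crossing time `t⁻ + t⁺` tends to infinity as `x → 0`, so this bounded set of times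
has vanishing proportion.
-/

open Set Topology
open scoped ENNReal NNReal

section Flow

variable {E : Type*} [NormedAddCommGroup E] [NormedSpace ℝ E] (A : E →L[ℝ] E)

theorem exp_add_smul [CompleteSpace E] (s t : ℝ) :
    exp ((s + t) • A) = exp (s • A) * exp (t • A) := by
  rw [add_smul, exp_add_of_commute_of_mem_ball (𝕂 := ℝ)
    ((Commute.refl A).smul_left s |>.smul_right t)] <;> simp [expSeries_radius_eq_top]

theorem exp_neg_smul_apply_exp_smul_apply [CompleteSpace E] (t : ℝ) (y : E) :
    exp ((-t) • A) (exp (t • A) y) = y := by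
  rw [← mul_apply_eq_comp, ← exp_add_smul, neg_add_cancel, zero_smul, exp_zero, one_apply_eq_self]

theorem continuous_exp_smul [CompleteSpace E] : Continuous fun s : ℝ => exp (s • A) :=
  continuous_iff_continuousAt.2 fun t => (hasDerivAt_exp_smul_const A t).continuousAt

theorem eventually_forall_exp_smul_apply_mem [CompleteSpace E] {K : Set ℝ} (hK : IsCompact K)
    {U : Set E} (hU : U ∈ 𝓝 0) : ∀ᶠ y in 𝓝 0, ∀ s ∈ K, exp (s • A) y ∈ U := by
  have hcont : Continuous fun p : E × ℝ => exp (p.2 • A) p.1 :=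
    ((continuous_exp_smul A).comp continuous_snd).clm_apply continuous_fst
  refine hK.eventually_forall_of_forall_eventually fun s _ => hcont.continuousAt ?_
  simpa using hU

/-- The exit time `t⁺` of the paper is the supremum of this set. -/
def timesInBall (y : E) (r : ℝ) : Set ℝ :=
  {t | 0 < t ∧ ∀ s ∈ Icc 0 t, exp (s • A) y ∈ Metric.closedBall 0 r}

theorem timesInBall_neg (y : E) (r : ℝ) :
    timesInBall (-A) y r =
      {t | 0 < t ∧ ∀ s ∈ Icc 0 t, exp ((-s) • A) y ∈ Metric.closedBall 0 r} := by
  simp only [timesInBall, smul_neg, neg_smul]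

theorem tendsto_sSup_timesInBall_atTop [CompleteSpace E] {ι : Type*} {l : Filter ι} {x : ι → E}
    (hx : Tendsto x l (𝓝 0)) {r : ℝ} (hr : 0 < r) (hbdd : ∀ i, BddAbove (timesInBall A (x i) r)) :
    Tendsto (fun i => sSup (timesInBall A (x i) r)) l atTop := by
  refine tendsto_atTop.2 fun T => ?_
  have hT : 0 < max T 1 := zero_lt_one.trans_le (le_max_right T 1)
  filter_upwards [hx.eventually (eventually_forall_exp_smul_apply_mem A isCompact_Icc
    (Metric.closedBall_mem_nhds 0 hr))] with i hi
  exact (le_max_left T 1).trans (le_csSup (hbdd i) ⟨hT, hi⟩)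

end Flow

section Projection

variable {𝕜 E : Type*} [RCLike 𝕜] [NormedAddCommGroup E] [InnerProductSpace 𝕜 E]
  (K : Submodule 𝕜 E) [K.HasOrthogonalProjection]

theorem Submodule.commute_starProjection_of_mapsTo {T : E →L[𝕜] E} (hK : ∀ v ∈ K, T v ∈ K)
    (hKperp : ∀ v ∈ Kᗮ, T v ∈ Kᗮ) : Commute K.starProjection T := by
  refine (ContinuousLinearMap.IsIdempotentElem.commute_iff
    K.isIdempotentElem_starProjection).2 ⟨?_, ?_⟩
  · rw [Submodule.range_starProjection]
    exact (Module.End.mem_invtSubmodule_iff_forall_mem_of_mem _).2 hK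
  · rw [Submodule.ker_starProjection]
    exact (Module.End.mem_invtSubmodule_iff_forall_mem_of_mem _).2 hKperp

variable {K} in
theorem Commute.starProjection_exp_smul_apply [CompleteSpace E] {A : E →L[𝕜] E}
    (h : Commute K.starProjection A) (t : 𝕜) (z : E) :
    K.starProjection (NormedSpace.exp (t • A) z) = NormedSpace.exp (t • A) (K.starProjection z) :=
  DFunLike.congr_fun ((h.smul_right t).exp_right).eq z

end Projection

theorem le_log_div_of_growth_gap {C α a b δ f₁ f₂ g₁ g₂ : ℝ} (hC : 0 < C) (hα : 0 < α)
    (hab : a < b) (hf : f₂ ≤ C * Real.exp (a * δ) * f₁)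
    (hg : C⁻¹ * Real.exp (b * δ) * g₁ ≤ g₂) (hg₁ : 0 < g₁)
    (h₁ : α * f₁ ≤ g₁) (h₂ : α * g₂ ≤ f₂) :
    δ ≤ Real.log (C ^ 2 / α ^ 2) / (b - a) := by
  have hchain : α ^ 2 * (C⁻¹ * Real.exp (b * δ)) * g₁ ≤ C * Real.exp (a * δ) * g₁ := by
    calc α ^ 2 * (C⁻¹ * Real.exp (b * δ)) * g₁ ≤ α * (α * g₂) := by
          rw [mul_assoc, sq, mul_assoc]; gcongr
      _ ≤ α * (C * Real.exp (a * δ) * f₁) := mul_le_mul_of_nonneg_left (h₂.trans hf) hα.le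
      _ = C * Real.exp (a * δ) * (α * f₁) := by ring
      _ ≤ C * Real.exp (a * δ) * g₁ := by gcongr
  have hexp : α ^ 2 * Real.exp ((b - a) * δ) ≤ C ^ 2 := by
    have := le_of_mul_le_mul_right hchain hg₁
    rw [sub_mul, Real.exp_sub]
    field_simp at this ⊢
    linarith
  rw [le_div_iff₀ (sub_pos.2 hab), mul_comm, Real.le_log_iff_exp_le (by positivity),
    le_div_iff₀ (by positivity), mul_comm]
  exact hexp

theorem volume_Ioo_le_volume_inter_add {S : Set ℝ} {L : ℝ}
    (hS : ∀ t₁ ∉ S, ∀ t₂ ∉ S, t₁ ≤ t₂ → t₂ - t₁ ≤ L) (m p : ℝ) :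
    volume (Ioo m p) ≤ volume (Ioo m p ∩ S) + ENNReal.ofReal L := by
  have hdiam : volume Sᶜ ≤ ENNReal.ofReal L := by
    refine (Real.volume_le_diam _).trans (Metric.ediam_le fun t₁ h₁ t₂ h₂ => ?_)
    rw [edist_dist, Real.dist_eq]
    refine ENNReal.ofReal_le_ofReal ?_
    rcases le_total t₁ t₂ with h | h
    · rw [abs_sub_comm, abs_of_nonneg (sub_nonneg.2 h)]
      exact hS t₁ h₁ t₂ h₂ h
    · rw [abs_of_nonneg (sub_nonneg.2 h)]
      exact hS t₂ h₂ t₁ h₁ h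
  calc volume (Ioo m p) ≤ volume (Ioo m p ∩ S) + volume (Ioo m p \ S) :=
        measure_le_inter_add_sdiff _ _ _
    _ ≤ volume (Ioo m p ∩ S) + ENNReal.ofReal L := by
        gcongr
        exact (measure_mono (sdiff_subset_compl _ _)).trans hdiam

theorem tendsto_toReal_div_of_le_add {ι : Type*} {l : Filter ι} {μ : ι → ℝ≥0∞} {T : ι → ℝ}
    {c : ℝ≥0} (hT : Tendsto T l atTop) (hle : ∀ i, μ i ≤ ENNReal.ofReal (T i))
    (hge : ∀ i, ENNReal.ofReal (T i) ≤ μ i + c) :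
    Tendsto (fun i => (μ i).toReal / T i) l (𝓝 1) := by
  have hlower : Tendsto (fun i => 1 - c / T i) l (𝓝 1) := by
    simpa using tendsto_const_nhds.sub (tendsto_const_nhds.div_atTop hT)
  refine tendsto_of_tendsto_of_tendsto_of_le_of_le' hlower tendsto_const_nhds ?_ ?_
  all_goals filter_upwards [hT.eventually_gt_atTop 0] with i hTi
  · have hμ : μ i ≠ ⊤ := ne_top_of_le_ne_top ENNReal.ofReal_ne_top (hle i)
    have := ENNReal.toReal_mono (by simp [hμ]) (hge i)
    rw [ENNReal.toReal_add hμ ENNReal.coe_ne_top, ENNReal.toReal_ofReal hTi.le] at this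
    rw [one_sub_div hTi.ne']
    gcongr
    simpa using this
  · exact div_le_one_of_le₀ (ENNReal.toReal_le_of_le_ofReal hTi.le (hle i)) hTi.le

section Cones

variable {d : ℕ}

local notation "E" => EuclideanSpace ℝ (Fin d)

theorem projComp_eq_norm_starProjection (K : Submodule ℝ E) (x : E) :
    projComp K x = ‖K.starProjection x‖ :=
  rfl

/-- The stable cone `Dˢ_α`. -/
def stableCone (Es : Submodule ℝ E) (α : ℝ) : Set E :=
  {z | projComp Esᗮ z < α * projComp Es z}

/-- The unstable cone `Dᵘ_α`. -/
def unstableCone (Es : Submodule ℝ E) (α : ℝ) : Set E :=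
  {z | projComp Es z < α * projComp Esᗮ z}

theorem sub_le_of_exp_smul_apply_notMem_cones {A : E →L[ℝ] E} {Es : Submodule ℝ E}
    {C a b α : ℝ} (hC : 0 < C) (hab : a < b) (hα : 0 < α)
    (hPs : Commute Es.starProjection A) (hPu : Commute Esᗮ.starProjection A)
    (hs : ∀ v ∈ Es, ∀ t : ℝ, 0 ≤ t → ‖exp (t • A) v‖ ≤ C * Real.exp (a * t) * ‖v‖)
    (hu : ∀ v ∈ Esᗮ, ∀ t : ℝ, 0 ≤ t → C⁻¹ * Real.exp (b * t) * ‖v‖ ≤ ‖exp (t • A) v‖)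
    {y : E} (hy : y ≠ 0) {t₁ t₂ : ℝ} (h12 : t₁ ≤ t₂)
    (h₁ : exp (t₁ • A) y ∉ stableCone Es α ∪ unstableCone Es α)
    (h₂ : exp (t₂ • A) y ∉ stableCone Es α ∪ unstableCone Es α) :
    t₂ - t₁ ≤ Real.log (C ^ 2 / α ^ 2) / (b - a) := by
  set z := exp (t₁ • A) y
  have hz : exp (t₂ • A) y = exp ((t₂ - t₁) • A) z := by
    rw [← mul_apply_eq_comp, ← exp_add_smul, sub_add_cancel]
  have hz0 : z ≠ 0 := fun h => hy <| by
    rw [← exp_neg_smul_apply_exp_smul_apply A t₁ y, show exp (t₁ • A) y = 0 from h, map_zero]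
  simp only [stableCone, unstableCone, mem_union, mem_ofPred_eq, not_or, not_lt,
    projComp_eq_norm_starProjection, hz, hPs.starProjection_exp_smul_apply,
    hPu.starProjection_exp_smul_apply] at h₁ h₂
  have hG₁ : 0 < ‖Esᗮ.starProjection z‖ := by
    by_contra! hle
    have hu0 : Esᗮ.starProjection z = 0 := norm_le_zero_iff.1 hle
    have hs0 : Es.starProjection z = 0 :=
      norm_le_zero_iff.1 (nonpos_of_mul_nonpos_right (h₁.1.trans hle) hα)
    exact hz0 (by rw [← Es.starProjection_add_starProjection_orthogonal z, hs0, hu0, add_zero])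
  exact le_log_div_of_growth_gap hC hα hab
    (hs _ (Es.starProjection_apply_mem z) _ (sub_nonneg.2 h12))
    (hu _ (Esᗮ.starProjection_apply_mem z) _ (sub_nonneg.2 h12)) hG₁ h₁.1 h₂.2

end Cones

theorem time_in_cones_full_proportion_general {d : ℕ}
    (A : EuclideanSpace ℝ (Fin d) →L[ℝ] EuclideanSpace ℝ (Fin d))
    (Es : Submodule ℝ (EuclideanSpace ℝ (Fin d)))
    (C a b : ℝ) (hC : 1 ≤ C) (ha : a < 0) (hb : 0 < b)
    (hinvs : ∀ v ∈ Es, A v ∈ Es) (hinvu : ∀ v ∈ Esᗮ, A v ∈ Esᗮ)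
    (hs : ∀ v ∈ Es, ∀ t : ℝ, 0 ≤ t → ‖NormedSpace.exp (t • A) v‖ ≤ C * Real.exp (a * t) * ‖v‖)
    (hu : ∀ v ∈ Esᗮ, ∀ t : ℝ, 0 ≤ t →
      C⁻¹ * Real.exp (b * t) * ‖v‖ ≤ ‖NormedSpace.exp (t • A) v‖)
    (r α : ℝ) (hr : 0 < r) (hα : α ∈ Set.Ioo (0 : ℝ) 1)
    (x : ℕ → EuclideanSpace ℝ (Fin d)) (hx0 : ∀ i, x i ≠ 0)
    (hxlim : Tendsto x atTop (nhds 0))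
    (tm tp : ℕ → ℝ)
    (htm : ∀ i, tm i = sSup {t : ℝ | 0 < t ∧ ∀ s ∈ Set.Icc (0 : ℝ) t,
      NormedSpace.exp ((-s) • A) (x i) ∈ Metric.closedBall (0 : EuclideanSpace ℝ (Fin d)) r})
    (htp : ∀ i, tp i = sSup {t : ℝ | 0 < t ∧ ∀ s ∈ Set.Icc (0 : ℝ) t,
      NormedSpace.exp (s • A) (x i) ∈ Metric.closedBall (0 : EuclideanSpace ℝ (Fin d)) r})
    (hbddm : ∀ i, BddAbove {t : ℝ | 0 < t ∧ ∀ s ∈ Set.Icc (0 : ℝ) t,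
      NormedSpace.exp ((-s) • A) (x i) ∈ Metric.closedBall (0 : EuclideanSpace ℝ (Fin d)) r})
    (hbddp : ∀ i, BddAbove {t : ℝ | 0 < t ∧ ∀ s ∈ Set.Icc (0 : ℝ) t,
      NormedSpace.exp (s • A) (x i) ∈ Metric.closedBall (0 : EuclideanSpace ℝ (Fin d)) r}) :
    Tendsto (fun i => tm i + tp i) atTop atTop ∧
    Tendsto (fun i =>
      (volume {t : ℝ | t ∈ Set.Ioo (-(tm i)) (tp i) ∧
        (projComp Esᗮ (NormedSpace.exp (t • A) (x i)) < α * projComp Es (NormedSpace.exp (t • A) (x i)) ∨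
         projComp Es (NormedSpace.exp (t • A) (x i)) <
           α * projComp Esᗮ (NormedSpace.exp (t • A) (x i)))}).toReal / (tm i + tp i))
      atTop (nhds 1) := by
  have hC0 : 0 < C := zero_lt_one.trans_le hC
  have htime : Tendsto (fun i => tm i + tp i) atTop atTop := by
    refine (Tendsto.atTop_add_atTop (tendsto_sSup_timesInBall_atTop (-A) hxlim hr
      fun i => by simpa only [timesInBall_neg] using hbddm i)
      (tendsto_sSup_timesInBall_atTop A hxlim hr hbddp)).congr fun i => ?_
    rw [htm, htp, timesInBall_neg]
    rfl
  have hPs : Commute Es.starProjection A := Es.commute_starProjection_of_mapsTo hinvs hinvu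
  have hPu : Commute Esᗮ.starProjection A :=
    Esᗮ.commute_starProjection_of_mapsTo hinvu (by rwa [Submodule.orthogonal_orthogonal])
  refine ⟨htime, tendsto_toReal_div_of_le_add (c := (Real.log (C ^ 2 / α ^ 2) / (b - a)).toNNReal)
    htime (fun i => ?_) (fun i => ?_)⟩
  · refine (measure_mono fun t ht => ht.1).trans_eq ?_
    rw [Real.volume_Ioo, sub_neg_eq_add, add_comm]
  · have hbad := volume_Ioo_le_volume_inter_add (fun t₁ h₁ t₂ h₂ h12 =>
      sub_le_of_exp_smul_apply_notMem_cones hC0 (ha.trans hb) hα.1 hPs hPu hs hu (hx0 i) h12 h₁ h₂)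
      (-tm i) (tp i)
    rwa [Real.volume_Ioo, sub_neg_eq_add, add_comm] at hbad

/-- Linear-model form of Lemma 3.3: for orbit segments through points `x_i → 0` of a
hyperbolic linear flow, crossing the ball `closedBall 0 r`, the total crossing times
`t_i⁻ + t_i⁺` tend to infinity and the fraction of time spent in the union of the stable
cone `Dˢ_α` and the unstable cone `Dᵘ_α` tends to one. -/
theorem time_in_cones_full_proportion {d : ℕ}
    (A : EuclideanSpace ℝ (Fin d) →L[ℝ] EuclideanSpace ℝ (Fin d))
    (hA : Function.Bijective A)
    (Es : Submodule ℝ (EuclideanSpace ℝ (Fin d)))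
    (C a b : ℝ) (hC : 1 ≤ C) (ha : a < 0) (hb : 0 < b)
    (hinvs : ∀ v ∈ Es, A v ∈ Es) (hinvu : ∀ v ∈ Esᗮ, A v ∈ Esᗮ)
    (hs : ∀ v ∈ Es, ∀ t : ℝ, 0 ≤ t → ‖NormedSpace.exp (t • A) v‖ ≤ C * Real.exp (a * t) * ‖v‖)
    (hu : ∀ v ∈ Esᗮ, ∀ t : ℝ, 0 ≤ t →
      C⁻¹ * Real.exp (b * t) * ‖v‖ ≤ ‖NormedSpace.exp (t • A) v‖)
    (r α : ℝ) (hr : 0 < r) (hα : α ∈ Set.Ioo (0 : ℝ) 1)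
    (x : ℕ → EuclideanSpace ℝ (Fin d)) (hx0 : ∀ i, x i ≠ 0)
    (hxlim : Tendsto x atTop (nhds 0))
    (tm tp : ℕ → ℝ)
    (htm : ∀ i, tm i = sSup {t : ℝ | 0 < t ∧ ∀ s ∈ Set.Icc (0 : ℝ) t,
      NormedSpace.exp ((-s) • A) (x i) ∈ Metric.closedBall (0 : EuclideanSpace ℝ (Fin d)) r})
    (htp : ∀ i, tp i = sSup {t : ℝ | 0 < t ∧ ∀ s ∈ Set.Icc (0 : ℝ) t,
      NormedSpace.exp (s • A) (x i) ∈ Metric.closedBall (0 : EuclideanSpace ℝ (Fin d)) r})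
    (hbddm : ∀ i, BddAbove {t : ℝ | 0 < t ∧ ∀ s ∈ Set.Icc (0 : ℝ) t,
      NormedSpace.exp ((-s) • A) (x i) ∈ Metric.closedBall (0 : EuclideanSpace ℝ (Fin d)) r})
    (hbddp : ∀ i, BddAbove {t : ℝ | 0 < t ∧ ∀ s ∈ Set.Icc (0 : ℝ) t,
      NormedSpace.exp (s • A) (x i) ∈ Metric.closedBall (0 : EuclideanSpace ℝ (Fin d)) r}) :
    Tendsto (fun i => tm i + tp i) atTop atTop ∧
    Tendsto (fun i =>
      (volume {t : ℝ | t ∈ Set.Ioo (-(tm i)) (tp i) ∧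
        (projComp Esᗮ (NormedSpace.exp (t • A) (x i)) < α * projComp Es (NormedSpace.exp (t • A) (x i)) ∨
         projComp Es (NormedSpace.exp (t • A) (x i)) <
           α * projComp Esᗮ (NormedSpace.exp (t • A) (x i)))}).toReal / (tm i + tp i))
      atTop (nhds 1) :=
  time_in_cones_full_proportion_general A Es C a b hC ha hb hinvs hinvu hs hu r α hr hα x hx0 hxlim
    tm tp htm htp hbddm hbddp
end

section
/- For each r > 0 there exist a ∈ (0, 1/2) and α₀ > 0, independent of α and of the sequence, such that for every α ∈ (0, α₀) and every sequence x_i ∈ E ∖ {0} with x_i → 0 whose entry and exit times t_i⁻ = sup{t > 0 : exp(−sA)x_i ∈ closedBall(0,r) for all s ∈ [0,t]} and t_i⁺ = sup{t > 0 : exp(sA)x_i ∈ closedBall(0,r) for all s ∈ [0,t]} are finite, one has for all sufficiently large i: Leb{t ∈ (−t_i⁻, t_i⁺) : exp(tA)x_i ∈ Dˢ_α} > a·(t_i⁻ + t_i⁺) and Leb{t ∈ (−t_i⁻, t_i⁺) : exp(tA)x_i ∈ Dᵘ_α} > a·(t_i⁻ + t_i⁺). (The times that orbit segments passing near a hyperbolic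 singularity spend in the stable cone and in the unstable cone are comparable, each occupying a uniformly positive fraction of the total time.) -/
open NormedSpace MeasureTheory Filter

/-!
Write `s t` and `u t` for the stable and unstable components of `exp (t • A) x`, and let `[t₀, t₁]`
be the crossing of the ball of radius `r`, of length `T`. Going back from the exit time, `u` decays
like `exp (-c₂ (t₁ - t))`, so at the entry time `u ≤ r / 2` once `T` is large, hence `s ≥ r / 2`;
since `s` decays at most like `exp (-‖A‖ (t - t₀))`, the orbit then stays in the stable cone for a
time of order `c₂ T / (‖A‖ + c₂)`. Reversing time exchanges the two cones, and `T → ∞` as `x → 0`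
because the flow moves points at most exponentially fast.
-/

open Set

theorem exists_pos_lt_one_add_mul_lt_self {M c c' : ℝ} (hM : 0 ≤ M) (hc : 0 < c) (hc' : 0 < c') :
    ∃ b, 0 < b ∧ b < 1 ∧ (M + c) * b < c ∧ (M + c') * b < c' := by
  have hmin : 0 < min (c / (M + c)) (c' / (M + c')) := lt_min (by positivity) (by positivity)
  have hlt : (M + c) * (min (c / (M + c)) (c' / (M + c')) / 2) < c :=
    (lt_div_iff₀' (by positivity)).1 (by linarith [min_le_left (c / (M + c)) (c' / (M + c'))])
  refine ⟨_, half_pos hmin, by nlinarith, hlt, (lt_div_iff₀' (by positivity)).1 ?_⟩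
  linarith [min_le_right (c / (M + c)) (c' / (M + c'))]

theorem eventually_mul_exp_le_mul_exp {μ ν : ℝ} (hμν : μ < ν) (K : ℝ) {L : ℝ} (hL : 0 < L) :
    ∀ᶠ T in atTop, K * Real.exp (μ * T) ≤ L * Real.exp (ν * T) := by
  filter_upwards [(Real.tendsto_exp_atTop.comp
    (tendsto_id.const_mul_atTop (sub_pos.2 hμν))).eventually_ge_atTop (K / L)] with T hT
  calc K * Real.exp (μ * T) = L * (K / L) * Real.exp (μ * T) := by field_simp
    _ ≤ L * Real.exp ((ν - μ) * T) * Real.exp (μ * T) := by gcongr; exact hT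
    _ = L * Real.exp (ν * T) := by rw [mul_assoc, ← Real.exp_add]; ring_nf

theorem le_toReal_volume_of_Ioo_subset {S : Set ℝ} {t₀ t₁ τ : ℝ} (hτ : 0 ≤ τ)
    (hS : S ⊆ Ioo t₀ t₁) (hsub : Ioo t₀ (t₀ + τ) ⊆ S) : τ ≤ (volume S).toReal := by
  have hfin : volume S ≠ ⊤ := ne_top_of_le_ne_top (by simp [Real.volume_Ioo]) (measure_mono hS)
  calc τ = (volume (Ioo t₀ (t₀ + τ))).toReal := by simp [Real.volume_Ioo, hτ]
    _ ≤ (volume S).toReal := ENNReal.toReal_mono hfin (measure_mono hsub)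

section Scalar
variable {s u : ℝ → ℝ} {C c M r α b t₀ t₁ : ℝ}

theorem mul_le_volume_setOf_lt_mul_of_expanding (hC : 0 < C) (hc : 0 < c) (hM : 0 ≤ M)
    (hr : 0 < r) (hα : 0 < α) (hα₁ : α ≤ 1) (hb : 0 ≤ b) (hb₁ : b ≤ 1) (h₀₁ : t₀ ≤ t₁)
    (hu : ∀ t' t, t' ≤ t → u t' ≤ C * Real.exp (-(c * (t - t'))) * u t)
    (hs : ∀ t' t, t' ≤ t → Real.exp (-(M * (t - t'))) * s t' ≤ s t)
    (h₀ : r ≤ s t₀ + u t₀) (h₁ : u t₁ ≤ r)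
    (hlong : 2 * C * Real.exp ((M + c) * b * (t₁ - t₀)) ≤ α * Real.exp (c * (t₁ - t₀))) :
    b * (t₁ - t₀) ≤ (volume {t | t ∈ Ioo t₀ t₁ ∧ u t < α * s t}).toReal := by
  set T := t₁ - t₀
  have hT : 0 ≤ T := sub_nonneg.2 h₀₁
  have hcT : 2 * C ≤ Real.exp (c * T) := calc
    2 * C ≤ 2 * C * Real.exp ((M + c) * b * T) :=
      le_mul_of_one_le_right (by positivity) (Real.one_le_exp (by positivity))
    _ ≤ α * Real.exp (c * T) := hlong
    _ ≤ Real.exp (c * T) := mul_le_of_le_one_left (Real.exp_pos _).le hα₁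
  have hu₀ : u t₀ ≤ r / 2 := calc
    u t₀ ≤ C * Real.exp (-(c * T)) * u t₁ := hu t₀ t₁ h₀₁
    _ ≤ C * Real.exp (-(c * T)) * r := by gcongr
    _ ≤ r / 2 := by
      rw [Real.exp_neg, ← div_eq_mul_inv, div_mul_eq_mul_div,
        div_le_div_iff₀ (by positivity) two_pos]
      nlinarith
  refine le_toReal_volume_of_Ioo_subset (by positivity) (fun t ht ↦ ht.1) ?_
  rintro t ⟨ht₀, ht⟩
  have ht₁ : t < t₁ := by nlinarith
  refine ⟨⟨ht₀, ht₁⟩, ?_⟩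
  set σ := t - t₀ with hσ
  have hkey : 2 * C * Real.exp ((M + c) * σ) < α * Real.exp (c * T) := by
    refine lt_of_lt_of_le ?_ hlong
    gcongr 2 * C * Real.exp ?_
    rw [mul_assoc]
    exact mul_lt_mul_of_pos_left (by linarith) (by linarith)
  calc u t ≤ C * Real.exp (-(c * (t₁ - t))) * r := (hu t t₁ ht₁.le).trans (by gcongr)
    _ = 2 * C * Real.exp ((M + c) * σ) * (r / 2 * Real.exp (-(c * T + M * σ))) := by
      rw [show -(c * (t₁ - t)) = (M + c) * σ + -(c * T + M * σ) by ring, Real.exp_add]; ring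
    _ < α * Real.exp (c * T) * (r / 2 * Real.exp (-(c * T + M * σ))) := by gcongr
    _ = α * (Real.exp (-(M * σ)) * (r / 2)) := by
      rw [show -(M * σ) = c * T + -(c * T + M * σ) by ring, Real.exp_add]; ring
    _ ≤ α * s t := by
      gcongr
      exact (mul_le_mul_of_nonneg_left (by linarith) (Real.exp_pos _).le).trans (hs t₀ t ht₀.le)

theorem mul_le_volume_setOf_lt_mul_of_contracting (hC : 0 < C) (hc : 0 < c) (hM : 0 ≤ M)
    (hr : 0 < r) (hα : 0 < α) (hα₁ : α ≤ 1) (hb : 0 ≤ b) (hb₁ : b ≤ 1) (h₀₁ : t₀ ≤ t₁)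
    (hs : ∀ t' t, t' ≤ t → s t ≤ C * Real.exp (-(c * (t - t'))) * s t')
    (hu : ∀ t' t, t' ≤ t → Real.exp (-(M * (t - t'))) * u t ≤ u t')
    (h₀ : s t₀ ≤ r) (h₁ : r ≤ s t₁ + u t₁)
    (hlong : 2 * C * Real.exp ((M + c) * b * (t₁ - t₀)) ≤ α * Real.exp (c * (t₁ - t₀))) :
    b * (t₁ - t₀) ≤ (volume {t | t ∈ Ioo t₀ t₁ ∧ s t < α * u t}).toReal := by
  have hrev := mul_le_volume_setOf_lt_mul_of_expanding (s := fun t ↦ u (-t))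
    (u := fun t ↦ s (-t)) (t₀ := -t₁) (t₁ := -t₀) hC hc hM hr hα hα₁ hb hb₁ (neg_le_neg h₀₁)
    (fun t' t h ↦ by simpa only [neg_sub_neg] using hs (-t) (-t') (neg_le_neg h))
    (fun t' t h ↦ by simpa only [neg_sub_neg] using hu (-t) (-t') (neg_le_neg h))
    (by simpa only [neg_neg, add_comm] using h₁) (by simpa only [neg_neg] using h₀)
    (by rwa [neg_sub_neg])
  have hset : {t | t ∈ Ioo (-t₁) (-t₀) ∧ s (-t) < α * u (-t)} =
      -{t | t ∈ Ioo t₀ t₁ ∧ s t < α * u t} := by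
    ext t
    simp only [mem_ofPred_eq, Set.mem_neg, mem_Ioo, neg_lt, lt_neg]
    tauto
  rwa [neg_sub_neg, hset, Measure.measure_neg] at hrev

end Scalar

section Sojourn
variable {X : Type*} [PseudoMetricSpace X]

def sojournTimes (F : ℝ → X) (p : X) (r : ℝ) : Set ℝ :=
  {t | 0 < t ∧ ∀ s ∈ Icc 0 t, F s ∈ Metric.closedBall p r}

theorem le_sSup_sojournTimes_and_mem_sphere {F : ℝ → X} (hF : Continuous F) {p : X} {r T : ℝ}
    (hT : 0 < T) (hin : ∀ s ∈ Icc 0 T, F s ∈ Metric.closedBall p r)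
    (hbdd : BddAbove (sojournTimes F p r)) :
    T ≤ sSup (sojournTimes F p r) ∧ F (sSup (sojournTimes F p r)) ∈ Metric.sphere p r := by
  set S := sojournTimes F p r
  have hTS : T ≤ sSup S := le_csSup hbdd ⟨hT, hin⟩
  refine ⟨hTS, ?_⟩
  set T' := sSup S
  have hIcc : Icc 0 T' ⊆ F ⁻¹' Metric.closedBall p r := by
    rw [← closure_Ico (hT.trans_le hTS).ne]
    refine closure_minimal (fun s ⟨hs₀, hsT'⟩ ↦ ?_) (Metric.isClosed_closedBall.preimage hF)
    obtain ⟨t, ht, hst⟩ := exists_lt_of_lt_csSup (⟨T, hT, hin⟩ : S.Nonempty) hsT'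
    exact ht.2 s ⟨hs₀, hst.le⟩
  refine Metric.mem_sphere.2
    (le_antisymm (hIcc ⟨(hT.trans_le hTS).le, le_rfl⟩) (not_lt.1 fun hlt ↦ ?_))
  -- strictly inside the ball at time `T'`, the orbit would stay in it a little longer
  obtain ⟨l, u, ⟨hlT', hT'u⟩, hlu⟩ := mem_nhds_iff_exists_Ioo_subset.1
    (hF.continuousAt.preimage_mem_nhds (Metric.isOpen_ball.mem_nhds hlt))
  have hmem : (T' + u) / 2 ∈ S := by
    refine ⟨by linarith [hT.trans_le hTS], fun s ⟨hs₀, hsu⟩ ↦ ?_⟩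
    rcases le_or_gt s T' with hsT' | hT's
    · exact hIcc ⟨hs₀, hsT'⟩
    · exact Metric.ball_subset_closedBall (hlu ⟨by linarith, by linarith⟩)
  linarith [le_csSup hbdd hmem]

end Sojourn

section Flow
variable {E : Type*} [NormedAddCommGroup E] [NormedSpace ℝ E]

theorem ContinuousLinearMap.norm_exp_le (B : E →L[ℝ] E) : ‖exp B‖ ≤ Real.exp ‖B‖ := by
  rw [exp_eq_tsum ℝ, Real.exp_eq_exp_ℝ, exp_eq_tsum ℝ]
  refine (norm_tsum_le_tsum_norm (norm_expSeries_summable' B)).trans <|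
    (norm_expSeries_summable' B).tsum_le_tsum (fun n ↦ ?_) (expSeries_summable' ‖B‖)
  rw [norm_smul, norm_inv, Real.norm_natCast, smul_eq_mul]
  gcongr
  rcases Nat.eq_zero_or_pos n with rfl | hn
  · rw [pow_zero, pow_zero, ContinuousLinearMap.one_def]
    exact ContinuousLinearMap.norm_id_le
  · exact norm_pow_le' B hn

theorem norm_exp_smul_apply_le (A : E →L[ℝ] E) (t : ℝ) (y : E) :
    ‖exp (t • A) y‖ ≤ Real.exp (|t| * ‖A‖) * ‖y‖ := by
  refine ((exp (t • A)).le_opNorm y).trans ?_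
  gcongr
  refine (ContinuousLinearMap.norm_exp_le _).trans ?_
  rw [norm_smul, Real.norm_eq_abs]

variable [CompleteSpace E]

theorem exp_add_smul_apply (A : E →L[ℝ] E) (s t : ℝ) (y : E) :
    exp ((s + t) • A) y = exp (s • A) (exp (t • A) y) := by
  have hball : ∀ B : E →L[ℝ] E, B ∈ Metric.eball 0 (expSeries ℝ (E →L[ℝ] E)).radius := fun B ↦
    (expSeries_radius_eq_top ℝ (E →L[ℝ] E)).symm ▸ edist_lt_top _ _
  rw [add_smul, exp_add_of_commute_of_mem_ball ((Commute.refl A).smul_left s |>.smul_right t)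
    (hball _) (hball _), mul_apply_eq_comp]

theorem norm_le_exp_mul_norm_exp_smul_apply (A : E →L[ℝ] E) (t : ℝ) (y : E) :
    ‖y‖ ≤ Real.exp (|t| * ‖A‖) * ‖exp (t • A) y‖ := by
  have := norm_exp_smul_apply_le A (-t) (exp (t • A) y)
  rwa [← exp_add_smul_apply, neg_add_cancel, zero_smul, exp_zero, abs_neg,
    ContinuousLinearMap.one_def, ContinuousLinearMap.id_apply] at this

theorem continuous_exp_smul_apply (A : E →L[ℝ] E) (y : E) :
    Continuous fun t : ℝ ↦ exp (t • A) y :=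
  (ContinuousLinearMap.apply ℝ E y).continuous.comp
    ((continuous_iff_continuousAt.2 fun B ↦ (exp_analytic (𝕂 := ℝ) B).continuousAt).comp
      (continuous_id.smul continuous_const))

theorem le_sSup_sojournTimes_exp_smul_and_norm_eq (A : E →L[ℝ] E) {g : ℝ → ℝ}
    (hg : Continuous g) (hg_abs : ∀ s, |g s| = |s|) {x : E} {r T : ℝ} (hT : 0 < T)
    (hx : Real.exp (T * ‖A‖) * ‖x‖ ≤ r)
    (hbdd : BddAbove (sojournTimes (fun s ↦ exp (g s • A) x) 0 r)) :
    T ≤ sSup (sojournTimes (fun s ↦ exp (g s • A) x) 0 r) ∧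
      ‖exp (g (sSup (sojournTimes (fun s ↦ exp (g s • A) x) 0 r)) • A) x‖ = r := by
  rw [← mem_sphere_zero_iff_norm]
  refine le_sSup_sojournTimes_and_mem_sphere ((continuous_exp_smul_apply A x).comp hg) hT
    (fun s hs ↦ mem_closedBall_zero_iff.2 ((norm_exp_smul_apply_le A _ x).trans (le_trans ?_ hx)))
    hbdd
  rw [hg_abs, abs_of_nonneg hs.1]
  gcongr
  exact hs.2

end Flow

theorem Submodule.commute_starProjection_of_mapsTo_s8 {E : Type*} [NormedAddCommGroup E]
    [InnerProductSpace ℝ E] (K : Submodule ℝ E) [K.HasOrthogonalProjection] {A : E →L[ℝ] E}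
    (hK : ∀ v ∈ K, A v ∈ K) (hK' : ∀ v ∈ Kᗮ, A v ∈ Kᗮ) : Commute K.starProjection A :=
  (ContinuousLinearMap.IsIdempotentElem.commute_iff K.isIdempotentElem_starProjection).2
    ⟨by rw [Submodule.range_starProjection]; exact (Module.End.mem_invtSubmodule _).2 hK,
     by rw [Submodule.ker_starProjection]; exact (Module.End.mem_invtSubmodule _).2 hK'⟩

section Projection
variable {d : ℕ} {A : EuclideanSpace ℝ (Fin d) →L[ℝ] EuclideanSpace ℝ (Fin d)}
  {K : Submodule ℝ (EuclideanSpace ℝ (Fin d))}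

theorem projComp_eq_norm_starProjection_s8 (y : EuclideanSpace ℝ (Fin d)) :
    projComp K y = ‖K.starProjection y‖ := rfl

theorem projComp_le_norm (K : Submodule ℝ (EuclideanSpace ℝ (Fin d)))
    (y : EuclideanSpace ℝ (Fin d)) : projComp K y ≤ ‖y‖ :=
  K.norm_starProjection_apply_le y

theorem norm_le_projComp_add_projComp_orthogonal (K : Submodule ℝ (EuclideanSpace ℝ (Fin d)))
    (y : EuclideanSpace ℝ (Fin d)) : ‖y‖ ≤ projComp K y + projComp Kᗮ y := by
  conv_lhs => rw [← K.starProjection_add_starProjection_orthogonal y]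
  exact norm_add_le _ _

theorem Commute.starProjection_orthogonal (hK : Commute K.starProjection A) :
    Commute Kᗮ.starProjection A := by
  rw [K.starProjection_orthogonal']
  exact (Commute.one_left A).sub_left hK

theorem projComp_exp_smul_apply (hK : Commute K.starProjection A) (t t' : ℝ)
    (y : EuclideanSpace ℝ (Fin d)) :
    projComp K (exp (t • A) y) = ‖exp ((t - t') • A) (K.starProjection (exp (t' • A) y))‖ := by
  conv_lhs => rw [← sub_add_cancel t t', exp_add_smul_apply]
  rw [projComp_eq_norm_starProjection_s8, ← mul_apply_eq_comp, (hK.smul_right _).exp_right.eq,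
    mul_apply_eq_comp]

theorem exp_neg_mul_projComp_le (hK : Commute K.starProjection A) (t t' : ℝ)
    (y : EuclideanSpace ℝ (Fin d)) :
    Real.exp (-(‖A‖ * |t - t'|)) * projComp K (exp (t' • A) y) ≤ projComp K (exp (t • A) y) := by
  rw [projComp_exp_smul_apply hK t t', Real.exp_neg, inv_mul_le_iff₀ (Real.exp_pos _),
    mul_comm ‖A‖]
  exact norm_le_exp_mul_norm_exp_smul_apply A _ _

theorem projComp_exp_smul_le_of_contracting {C c : ℝ} (hK : Commute K.starProjection A)
    (hs : ∀ v ∈ K, ∀ t : ℝ, 0 ≤ t → ‖exp (t • A) v‖ ≤ C * Real.exp (c * t) * ‖v‖)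
    {t' t : ℝ} (h : t' ≤ t) (y : EuclideanSpace ℝ (Fin d)) :
    projComp K (exp (t • A) y) ≤ C * Real.exp (c * (t - t')) * projComp K (exp (t' • A) y) := by
  rw [projComp_exp_smul_apply hK t t']
  exact hs _ (K.starProjection_apply_mem _) _ (sub_nonneg.2 h)

theorem projComp_exp_smul_le_of_expanding {C c : ℝ} (hC : 0 < C) (hK : Commute K.starProjection A)
    (hu : ∀ v ∈ K, ∀ t : ℝ, 0 ≤ t → C⁻¹ * Real.exp (c * t) * ‖v‖ ≤ ‖exp (t • A) v‖)
    {t' t : ℝ} (h : t' ≤ t) (y : EuclideanSpace ℝ (Fin d)) :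
    projComp K (exp (t' • A) y) ≤ C * Real.exp (-(c * (t - t'))) * projComp K (exp (t • A) y) := by
  rw [projComp_exp_smul_apply hK t t']
  calc projComp K (exp (t' • A) y)
      = C * Real.exp (-(c * (t - t'))) *
          (C⁻¹ * Real.exp (c * (t - t')) * projComp K (exp (t' • A) y)) := by
        rw [Real.exp_neg]; field_simp
    _ ≤ _ := by gcongr; exact hu _ (K.starProjection_apply_mem _) _ (sub_nonneg.2 h)

end Projection

section Cones
variable {d : ℕ} {A : EuclideanSpace ℝ (Fin d) →L[ℝ] EuclideanSpace ℝ (Fin d)}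
  {Es : Submodule ℝ (EuclideanSpace ℝ (Fin d))} {C c₁ c₂ r α b t₀ t₁ : ℝ}
  {x : EuclideanSpace ℝ (Fin d)}

theorem mul_le_volume_stableCone (hC : 0 < C) (hc₂ : 0 < c₂)
    (hEs : Commute Es.starProjection A)
    (hu : ∀ v ∈ Esᗮ, ∀ t : ℝ, 0 ≤ t → C⁻¹ * Real.exp (c₂ * t) * ‖v‖ ≤ ‖exp (t • A) v‖)
    (hr : 0 < r) (hα : 0 < α) (hα₁ : α ≤ 1) (hb : 0 ≤ b) (hb₁ : b ≤ 1) (h₀₁ : t₀ ≤ t₁)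
    (h₀ : ‖exp (t₀ • A) x‖ = r) (h₁ : ‖exp (t₁ • A) x‖ = r)
    (hlong : 2 * C * Real.exp ((‖A‖ + c₂) * b * (t₁ - t₀)) ≤ α * Real.exp (c₂ * (t₁ - t₀))) :
    b * (t₁ - t₀) ≤ (volume {t | t ∈ Ioo t₀ t₁ ∧
      projComp Esᗮ (exp (t • A) x) < α * projComp Es (exp (t • A) x)}).toReal :=
  mul_le_volume_setOf_lt_mul_of_expanding hC hc₂ (norm_nonneg A) hr hα hα₁ hb hb₁ h₀₁
    (fun _ _ h ↦ projComp_exp_smul_le_of_expanding hC hEs.starProjection_orthogonal hu h x)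
    (fun t' t h ↦ by
      simpa only [abs_of_nonneg (sub_nonneg.2 h)] using exp_neg_mul_projComp_le hEs t t' x)
    (h₀ ▸ norm_le_projComp_add_projComp_orthogonal Es _) (h₁ ▸ projComp_le_norm Esᗮ _) hlong

theorem mul_le_volume_unstableCone (hC : 0 < C) (hc₁ : c₁ < 0)
    (hEs : Commute Es.starProjection A)
    (hs : ∀ v ∈ Es, ∀ t : ℝ, 0 ≤ t → ‖exp (t • A) v‖ ≤ C * Real.exp (c₁ * t) * ‖v‖)
    (hr : 0 < r) (hα : 0 < α) (hα₁ : α ≤ 1) (hb : 0 ≤ b) (hb₁ : b ≤ 1) (h₀₁ : t₀ ≤ t₁)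
    (h₀ : ‖exp (t₀ • A) x‖ = r) (h₁ : ‖exp (t₁ • A) x‖ = r)
    (hlong : 2 * C * Real.exp ((‖A‖ + -c₁) * b * (t₁ - t₀)) ≤ α * Real.exp (-c₁ * (t₁ - t₀))) :
    b * (t₁ - t₀) ≤ (volume {t | t ∈ Ioo t₀ t₁ ∧
      projComp Es (exp (t • A) x) < α * projComp Esᗮ (exp (t • A) x)}).toReal :=
  mul_le_volume_setOf_lt_mul_of_contracting hC (neg_pos.2 hc₁) (norm_nonneg A) hr hα hα₁ hb hb₁
    h₀₁
    (fun _ _ h ↦ by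
      simpa only [neg_mul, neg_neg] using projComp_exp_smul_le_of_contracting hEs hs h x)
    (fun t' t h ↦ by
      simpa only [abs_sub_comm t' t, abs_of_nonneg (sub_nonneg.2 h)] using
        exp_neg_mul_projComp_le hEs.starProjection_orthogonal t' t x)
    (h₀ ▸ projComp_le_norm Es _) (h₁ ▸ norm_le_projComp_add_projComp_orthogonal Es _) hlong

end Cones

theorem time_in_cones_comparable_general {d : ℕ}
    (A : EuclideanSpace ℝ (Fin d) →L[ℝ] EuclideanSpace ℝ (Fin d))
    (Es : Submodule ℝ (EuclideanSpace ℝ (Fin d)))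
    (C c₁ c₂ : ℝ) (hC : 1 ≤ C) (hc₁ : c₁ < 0) (hc₂ : 0 < c₂)
    (hinvs : ∀ v ∈ Es, A v ∈ Es) (hinvu : ∀ v ∈ Esᗮ, A v ∈ Esᗮ)
    (hs : ∀ v ∈ Es, ∀ t : ℝ, 0 ≤ t → ‖exp (t • A) v‖ ≤ C * Real.exp (c₁ * t) * ‖v‖)
    (hu : ∀ v ∈ Esᗮ, ∀ t : ℝ, 0 ≤ t →
      C⁻¹ * Real.exp (c₂ * t) * ‖v‖ ≤ ‖exp (t • A) v‖)
    (r : ℝ) (hr : 0 < r) :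
    ∃ a : ℝ, a ∈ Set.Ioo (0 : ℝ) (1/2) ∧ ∃ α₀ : ℝ, 0 < α₀ ∧
      ∀ α : ℝ, α ∈ Set.Ioo (0 : ℝ) α₀ →
      ∀ x : ℕ → EuclideanSpace ℝ (Fin d), (∀ i, x i ≠ 0) →
      Tendsto x atTop (nhds 0) →
      ∀ tm tp : ℕ → ℝ,
      (∀ i, tm i = sSup {t : ℝ | 0 < t ∧ ∀ s ∈ Set.Icc (0 : ℝ) t,
        exp ((-s) • A) (x i) ∈ Metric.closedBall (0 : EuclideanSpace ℝ (Fin d)) r}) →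
      (∀ i, tp i = sSup {t : ℝ | 0 < t ∧ ∀ s ∈ Set.Icc (0 : ℝ) t,
        exp (s • A) (x i) ∈ Metric.closedBall (0 : EuclideanSpace ℝ (Fin d)) r}) →
      (∀ i, BddAbove {t : ℝ | 0 < t ∧ ∀ s ∈ Set.Icc (0 : ℝ) t,
        exp ((-s) • A) (x i) ∈ Metric.closedBall (0 : EuclideanSpace ℝ (Fin d)) r}) →
      (∀ i, BddAbove {t : ℝ | 0 < t ∧ ∀ s ∈ Set.Icc (0 : ℝ) t,
        exp (s • A) (x i) ∈ Metric.closedBall (0 : EuclideanSpace ℝ (Fin d)) r}) →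
      ∃ N : ℕ, ∀ i ≥ N,
        a * (tm i + tp i) <
          (volume {t : ℝ | t ∈ Set.Ioo (-(tm i)) (tp i) ∧
            projComp Esᗮ (exp (t • A) (x i)) <
              α * projComp Es (exp (t • A) (x i))}).toReal ∧
        a * (tm i + tp i) <
          (volume {t : ℝ | t ∈ Set.Ioo (-(tm i)) (tp i) ∧
            projComp Es (exp (t • A) (x i)) <
              α * projComp Esᗮ (exp (t • A) (x i))}).toReal := by
  have hC₀ : 0 < C := by linarith
  have hEs := Es.commute_starProjection_of_mapsTo_s8 hinvs hinvu
  obtain ⟨b, hb₀, hb₁, hbu, hbs⟩ :=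
    exists_pos_lt_one_add_mul_lt_self (norm_nonneg A) hc₂ (neg_pos.2 hc₁)
  refine ⟨b / 2, ⟨by positivity, by linarith⟩, 1, one_pos, ?_⟩
  rintro α ⟨hα, hα₁⟩ x - hx tm tp htm htp hbm hbp
  obtain ⟨T₀, hT₀⟩ := eventually_atTop.1 ((eventually_mul_exp_le_mul_exp hbu (2 * C) hα).and
    (eventually_mul_exp_le_mul_exp hbs (2 * C) hα))
  set T₁ := max T₀ 1
  have hT₁ : 0 < T₁ := lt_max_of_lt_right one_pos
  obtain ⟨N, hN⟩ := eventually_atTop.1 <| (Metric.tendsto_nhds.1 hx _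
    (by positivity : 0 < r / Real.exp (T₁ * ‖A‖))).mono fun i hi ↦
      ((lt_div_iff₀' (Real.exp_pos _)).1 (by rwa [dist_zero_right] at hi)).le
  refine ⟨N, fun i hi ↦ ?_⟩
  have hm : T₁ ≤ tm i ∧ ‖exp ((-tm i) • A) (x i)‖ = r := by
    rw [htm i]
    exact le_sSup_sojournTimes_exp_smul_and_norm_eq A continuous_neg abs_neg hT₁ (hN i hi) (hbm i)
  have hp : T₁ ≤ tp i ∧ ‖exp (tp i • A) (x i)‖ = r := by
    rw [htp i]
    exact le_sSup_sojournTimes_exp_smul_and_norm_eq A continuous_id (fun _ ↦ rfl) hT₁ (hN i hi)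
      (hbp i)
  have h₀₁ : -tm i ≤ tp i := by linarith
  have hT : T₀ ≤ tp i - -tm i := by linarith [le_max_left T₀ 1]
  have hhalf : b / 2 * (tm i + tp i) < b * (tp i - -tm i) := by nlinarith
  exact ⟨hhalf.trans_le (mul_le_volume_stableCone hC₀ hc₂ hEs hu hr hα hα₁.le hb₀.le hb₁.le h₀₁
      hm.2 hp.2 (hT₀ _ hT).1),
    hhalf.trans_le (mul_le_volume_unstableCone hC₀ hc₁ hEs hs hr hα hα₁.le hb₀.le hb₁.le h₀₁
      hm.2 hp.2 (hT₀ _ hT).2)⟩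

/-- Linear-model form of Lemma 3.4: the times that orbit segments of a hyperbolic linear
flow passing near the singularity spend in the stable cone `Dˢ_α` and in the unstable
cone `Dᵘ_α` are comparable: there are `a ∈ (0, 1/2)` and `α₀ > 0`, independent of `α` and
of the sequence, such that each cone occupies at least the fraction `a` of the total
crossing time `t_i⁻ + t_i⁺`, for all sufficiently large `i`. -/
theorem time_in_cones_comparable {d : ℕ}
    (A : EuclideanSpace ℝ (Fin d) →L[ℝ] EuclideanSpace ℝ (Fin d))
    (hA : Function.Bijective A)
    (Es : Submodule ℝ (EuclideanSpace ℝ (Fin d)))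
    (C c₁ c₂ : ℝ) (hC : 1 ≤ C) (hc₁ : c₁ < 0) (hc₂ : 0 < c₂)
    (hinvs : ∀ v ∈ Es, A v ∈ Es) (hinvu : ∀ v ∈ Esᗮ, A v ∈ Esᗮ)
    (hs : ∀ v ∈ Es, ∀ t : ℝ, 0 ≤ t → ‖exp (t • A) v‖ ≤ C * Real.exp (c₁ * t) * ‖v‖)
    (hu : ∀ v ∈ Esᗮ, ∀ t : ℝ, 0 ≤ t →
      C⁻¹ * Real.exp (c₂ * t) * ‖v‖ ≤ ‖exp (t • A) v‖)
    (r : ℝ) (hr : 0 < r) :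
    ∃ a : ℝ, a ∈ Set.Ioo (0 : ℝ) (1/2) ∧ ∃ α₀ : ℝ, 0 < α₀ ∧
      ∀ α : ℝ, α ∈ Set.Ioo (0 : ℝ) α₀ →
      ∀ x : ℕ → EuclideanSpace ℝ (Fin d), (∀ i, x i ≠ 0) →
      Tendsto x atTop (nhds 0) →
      ∀ tm tp : ℕ → ℝ,
      (∀ i, tm i = sSup {t : ℝ | 0 < t ∧ ∀ s ∈ Set.Icc (0 : ℝ) t,
        exp ((-s) • A) (x i) ∈ Metric.closedBall (0 : EuclideanSpace ℝ (Fin d)) r}) →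
      (∀ i, tp i = sSup {t : ℝ | 0 < t ∧ ∀ s ∈ Set.Icc (0 : ℝ) t,
        exp (s • A) (x i) ∈ Metric.closedBall (0 : EuclideanSpace ℝ (Fin d)) r}) →
      (∀ i, BddAbove {t : ℝ | 0 < t ∧ ∀ s ∈ Set.Icc (0 : ℝ) t,
        exp ((-s) • A) (x i) ∈ Metric.closedBall (0 : EuclideanSpace ℝ (Fin d)) r}) →
      (∀ i, BddAbove {t : ℝ | 0 < t ∧ ∀ s ∈ Set.Icc (0 : ℝ) t,
        exp (s • A) (x i) ∈ Metric.closedBall (0 : EuclideanSpace ℝ (Fin d)) r}) →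
      ∃ N : ℕ, ∀ i ≥ N,
        a * (tm i + tp i) <
          (volume {t : ℝ | t ∈ Set.Ioo (-(tm i)) (tp i) ∧
            projComp Esᗮ (exp (t • A) (x i)) <
              α * projComp Es (exp (t • A) (x i))}).toReal ∧
        a * (tm i + tp i) <
          (volume {t : ℝ | t ∈ Set.Ioo (-(tm i)) (tp i) ∧
            projComp Es (exp (t • A) (x i)) <
              α * projComp Esᗮ (exp (t • A) (x i))}).toReal :=
  time_in_cones_comparable_general A Es C c₁ c₂ hC hc₁ hc₂ hinvs hinvu hs hu r hr
end

section
/- Let α > 0 and let y ≠ 0 satisfy ‖P_Eu(Ay)‖ ≤ α·‖P_Ecs(Ay)‖ (the flow direction at y lies in the α-cone of Ecs). Then for every t ≥ 0 and every v ∈ Eu with v ⊥ Ay: ‖ψ*_{−t}(y)v‖ ≤ C²·√(1+α²)·exp(−(λ_u − λ_s)·t)·‖v‖. In particular the scaled linear Poincaré flow is uniformly exponentially backward contracting on unstable normal directions at points whose flow direction lies in the center-stable cone (linear-model form of Case 1 of Lemma 3.8). -/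
/-!
Write `B = exp (-t • A)` for the backward flow. The scaling factor `‖A y‖ / ‖A (B y)‖` is at most
`C √(1 + α²) e^{λ_s t}`: the cone condition gives `‖A y‖ ≤ √(1 + α²) ‖P_Ecs (A y)‖`, forward
contraction on `Ecs` gives `‖P_Ecs (A y)‖ ≤ C e^{λ_s t} ‖B P_Ecs (A y)‖`, and since `B` commutes
with `A` and preserves the orthogonal splitting, `B P_Ecs (A y)` is the `Ecs`-component of
`A (B y)`. The projected part is at most `‖B v‖ ≤ C e^{-λ_u t} ‖v‖` by forward expansion on `Eu`.
-/

open NormedSpace RealInnerProductSpace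

theorem exp_mul_exp_neg {𝔸 : Type*} [NormedRing 𝔸] [NormedAlgebra ℝ 𝔸] [CompleteSpace 𝔸]
    (x : 𝔸) : exp x * exp (-x) = 1 :=
  (invertibleExpOfMemBall (𝕂 := ℝ) <|
    (expSeries_radius_eq_top ℝ 𝔸).symm ▸ edist_lt_top x 0).mul_invOf_self

theorem ContinuousLinearMap.exp_smul_apply_exp_neg_smul_apply {E : Type*} [NormedAddCommGroup E]
    [NormedSpace ℝ E] [CompleteSpace E] (A : E →L[ℝ] E) (t : ℝ) (w : E) :
    exp (t • A) (exp ((-t) • A) w) = w := by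
  rw [neg_smul, ← mul_apply_eq_comp, exp_mul_exp_neg, one_apply_eq_self]

theorem Submodule.exp_apply_mem {E : Type*} [NormedAddCommGroup E] [NormedSpace ℝ E]
    [CompleteSpace E] {p : Submodule ℝ E} (hp : IsClosed (p : Set E)) {T : E →L[ℝ] E}
    (hT : Set.MapsTo T p p) {v : E} (hv : v ∈ p) : exp T v ∈ p := by
  have hsum := (exp_series_hasSum_exp' (𝕂 := ℝ) T).mapL (ContinuousLinearMap.apply ℝ E v)
  refine hp.mem_of_tendsto hsum.tendsto_sum_nat (.of_forall fun n => ?_)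
  refine p.sum_mem fun k _ => p.smul_mem _ ?_
  show (T ^ k) v ∈ p
  rw [pow_apply_eq_iterate]
  exact hT.iterate k hv

theorem norm_le_norm_add_of_inner_eq_zero {F : Type*} [NormedAddCommGroup F]
    [InnerProductSpace ℝ F] {x y : F} (h : ⟪x, y⟫ = 0) : ‖x‖ ≤ ‖x + y‖ := by
  refine (mul_self_le_mul_self_iff (norm_nonneg _) (norm_nonneg _)).2 ?_
  rw [norm_add_sq_eq_norm_sq_add_norm_sq_real h]
  exact le_add_of_nonneg_right (mul_self_nonneg _)

theorem Submodule.norm_le_sqrt_one_add_sq_mul_of_norm_orthogonalProjectionOnto_le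
    {F : Type*} [NormedAddCommGroup F] [InnerProductSpace ℝ F] (K : Submodule ℝ F)
    [K.HasOrthogonalProjection] {x : F} {α : ℝ}
    (h : ‖Kᗮ.orthogonalProjectionOnto x‖ ≤ α * ‖K.orthogonalProjectionOnto x‖) :
    ‖x‖ ≤ √(1 + α ^ 2) * ‖K.orthogonalProjectionOnto x‖ := by
  rw [← Real.sqrt_sq (norm_nonneg (K.orthogonalProjectionOnto x)),
    ← Real.sqrt_mul (by positivity)]
  apply Real.le_sqrt_of_sq_le
  rw [norm_sq_eq_add_norm_sq_projection x K]
  nlinarith [pow_le_pow_left₀ (norm_nonneg _) h 2]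

section LinearModel

variable {E : Type*} [NormedAddCommGroup E] [InnerProductSpace ℝ E] [FiniteDimensional ℝ E]
  {A : E →L[ℝ] E}

theorem exp_smul_apply_mem_of_invariant {W : Submodule ℝ E} (hW : ∀ v ∈ W, A v ∈ W) (t : ℝ)
    {v : E} (hv : v ∈ W) : exp (t • A) v ∈ W :=
  W.exp_apply_mem W.closed_of_finiteDimensional (fun w hw => W.smul_mem t (hW w hw)) hv

theorem norm_exp_neg_smul_apply_le_of_expanding {W : Submodule ℝ E} {C lam t : ℝ} (hC : 0 < C)
    (hW : ∀ v ∈ W, A v ∈ W)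
    (hexp : ∀ v ∈ W, ∀ t : ℝ, 0 ≤ t → C⁻¹ * Real.exp (lam * t) * ‖v‖ ≤ ‖exp (t • A) v‖)
    (ht : 0 ≤ t) {v : E} (hv : v ∈ W) :
    ‖exp ((-t) • A) v‖ ≤ C * Real.exp (-(lam * t)) * ‖v‖ := by
  have h := hexp _ (exp_smul_apply_mem_of_invariant hW (-t) hv) t ht
  rw [A.exp_smul_apply_exp_neg_smul_apply] at h
  calc ‖exp ((-t) • A) v‖
      = C * Real.exp (-(lam * t)) * (C⁻¹ * Real.exp (lam * t) * ‖exp ((-t) • A) v‖) := by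
        rw [Real.exp_neg]; field_simp
    _ ≤ C * Real.exp (-(lam * t)) * ‖v‖ := by gcongr

theorem norm_apply_div_norm_apply_exp_neg_smul_le_of_cone {Ecs : Submodule ℝ E}
    {C lamS α t : ℝ} (hC : 0 ≤ C)
    (hinvcs : ∀ v ∈ Ecs, A v ∈ Ecs) (hinvu : ∀ v ∈ Ecsᗮ, A v ∈ Ecsᗮ)
    (hcs : ∀ v ∈ Ecs, ∀ t : ℝ, 0 ≤ t → ‖exp (t • A) v‖ ≤ C * Real.exp (lamS * t) * ‖v‖)
    {y : E} (hdir : ‖Ecsᗮ.orthogonalProjectionOnto (A y)‖ ≤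
      α * ‖Ecs.orthogonalProjectionOnto (A y)‖) (ht : 0 ≤ t) :
    ‖A y‖ / ‖A (exp ((-t) • A) y)‖ ≤ C * √(1 + α ^ 2) * Real.exp (lamS * t) := by
  set B := exp ((-t) • A)
  set s : E := (Ecs.orthogonalProjectionOnto (A y) : E)
  set u : E := (Ecsᗮ.orthogonalProjectionOnto (A y) : E)
  have hs : s ∈ Ecs := Submodule.coe_mem _
  have hu : u ∈ Ecsᗮ := Submodule.coe_mem _
  have hsplit : A (B y) = B s + B u := by
    have hAB : A * B = B * A := ((Commute.refl A).smul_right (-t)).exp_right.eq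
    have hAy : s + u = A y := Ecs.starProjection_add_starProjection_orthogonal (A y)
    rw [← map_add, hAy]
    exact DFunLike.congr_fun hAB y
  have hBs : ‖B s‖ ≤ ‖A (B y)‖ := hsplit ▸ norm_le_norm_add_of_inner_eq_zero
    (Submodule.inner_right_of_mem_orthogonal (exp_smul_apply_mem_of_invariant hinvcs (-t) hs)
      (exp_smul_apply_mem_of_invariant hinvu (-t) hu))
  have hs_le : ‖s‖ ≤ C * Real.exp (lamS * t) * ‖B s‖ := by
    simpa only [B, A.exp_smul_apply_exp_neg_smul_apply] using
      hcs _ (exp_smul_apply_mem_of_invariant hinvcs (-t) hs) t ht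
  -- also covers `A (B y) = 0`, where the quotient is the junk value `0`
  refine div_le_of_le_mul₀ (norm_nonneg _) (by positivity) ?_
  calc ‖A y‖ ≤ √(1 + α ^ 2) * ‖s‖ :=
        Ecs.norm_le_sqrt_one_add_sq_mul_of_norm_orthogonalProjectionOnto_le hdir
    _ ≤ √(1 + α ^ 2) * (C * Real.exp (lamS * t) * ‖A (B y)‖) := by
        gcongr; exact hs_le.trans (by gcongr)
    _ = C * √(1 + α ^ 2) * Real.exp (lamS * t) * ‖A (B y)‖ := by ring

end LinearModel

theorem scaledLPF_backward_contracts_unstable_general {d : ℕ}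
    (A : EuclideanSpace ℝ (Fin d) →L[ℝ] EuclideanSpace ℝ (Fin d))
    (Ecs : Submodule ℝ (EuclideanSpace ℝ (Fin d)))
    (C lamS lamU : ℝ) (hC : 1 ≤ C)
    (hinvcs : ∀ v ∈ Ecs, A v ∈ Ecs) (hinvu : ∀ v ∈ Ecsᗮ, A v ∈ Ecsᗮ)
    (hcs : ∀ v ∈ Ecs, ∀ t : ℝ, 0 ≤ t →
      ‖exp (t • A) v‖ ≤ C * Real.exp (lamS * t) * ‖v‖)
    (hu : ∀ v ∈ Ecsᗮ, ∀ t : ℝ, 0 ≤ t →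
      C⁻¹ * Real.exp (lamU * t) * ‖v‖ ≤ ‖exp (t • A) v‖)
    (α : ℝ)
    (y : EuclideanSpace ℝ (Fin d))
    (hdir : ‖(Submodule.orthogonalProjectionOnto Ecsᗮ (A y) : EuclideanSpace ℝ (Fin d))‖ ≤
      α * ‖(Submodule.orthogonalProjectionOnto Ecs (A y) : EuclideanSpace ℝ (Fin d))‖) :
    ∀ t : ℝ, 0 ≤ t → ∀ v ∈ Ecsᗮ, ⟪v, A y⟫ = 0 →
      ‖scaledLPF A (-t) y v‖ ≤
        C ^ 2 * Real.sqrt (1 + α ^ 2) * Real.exp (-(lamU - lamS) * t) * ‖v‖ := by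
  intro t ht v hv _
  have hC0 : 0 < C := zero_lt_one.trans_le hC
  rw [scaledLPF, norm_smul, Real.norm_of_nonneg (by positivity)]
  calc _ ≤ (C * √(1 + α ^ 2) * Real.exp (lamS * t)) * (C * Real.exp (-(lamU * t)) * ‖v‖) :=
        mul_le_mul
          (norm_apply_div_norm_apply_exp_neg_smul_le_of_cone hC0.le hinvcs hinvu hcs hdir ht)
          ((Submodule.norm_orthogonalProjectionOnto_apply_le _ _).trans
            (norm_exp_neg_smul_apply_le_of_expanding hC0 hinvu hu ht hv))
          (norm_nonneg _) (by positivity)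
    _ = C ^ 2 * Real.sqrt (1 + α ^ 2) * Real.exp (-(lamU - lamS) * t) * ‖v‖ := by
        rw [show -(lamU - lamS) * t = lamS * t + -(lamU * t) by ring, Real.exp_add]
        ring

/-- Linear-model form of Case 1 of Lemma 3.8: near a Lorenz-like singularity
(orthogonal `A`-invariant splitting `E = Ecs ⊕ Eu` with rates `λ_s < 0 < λ_u`), at a
point `y ≠ 0` whose flow direction lies in the `α`-cone of `Ecs`, the scaled linear
Poincaré flow contracts unstable normal directions uniformly exponentially backwards:
`‖ψ*_{−t}(y)v‖ ≤ C²·√(1+α²)·exp(−(λ_u − λ_s)t)·‖v‖` for `v ∈ Eu`, `v ⊥ Ay`, `t ≥ 0`. -/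
theorem scaledLPF_backward_contracts_unstable {d : ℕ}
    (A : EuclideanSpace ℝ (Fin d) →L[ℝ] EuclideanSpace ℝ (Fin d))
    (hA : Function.Bijective A)
    (Ecs : Submodule ℝ (EuclideanSpace ℝ (Fin d)))
    (C lamS lamU : ℝ) (hC : 1 ≤ C) (hlamS : lamS < 0) (hlamU : 0 < lamU)
    (hinvcs : ∀ v ∈ Ecs, A v ∈ Ecs) (hinvu : ∀ v ∈ Ecsᗮ, A v ∈ Ecsᗮ)
    (hcs : ∀ v ∈ Ecs, ∀ t : ℝ, 0 ≤ t →
      ‖exp (t • A) v‖ ≤ C * Real.exp (lamS * t) * ‖v‖)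
    (hu : ∀ v ∈ Ecsᗮ, ∀ t : ℝ, 0 ≤ t →
      C⁻¹ * Real.exp (lamU * t) * ‖v‖ ≤ ‖exp (t • A) v‖)
    (α : ℝ) (hα : 0 < α)
    (y : EuclideanSpace ℝ (Fin d)) (hy : y ≠ 0)
    (hdir : ‖(Submodule.orthogonalProjectionOnto Ecsᗮ (A y) : EuclideanSpace ℝ (Fin d))‖ ≤
      α * ‖(Submodule.orthogonalProjectionOnto Ecs (A y) : EuclideanSpace ℝ (Fin d))‖) :
    ∀ t : ℝ, 0 ≤ t → ∀ v ∈ Ecsᗮ, ⟪v, A y⟫ = 0 →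
      ‖scaledLPF A (-t) y v‖ ≤
        C ^ 2 * Real.sqrt (1 + α ^ 2) * Real.exp (-(lamU - lamS) * t) * ‖v‖ :=
  scaledLPF_backward_contracts_unstable_general A Ecs C lamS lamU hC hinvcs hinvu hcs hu α y hdir
end

section
/- Let α ∈ (0,1), let y ≠ 0, let T > 0, and suppose the flow direction stays in the α-cone of Eu along the backward orbit segment: ‖P_{Ess⊕Ec}(A·exp(−tA)y)‖ ≤ α·‖P_Eu(A·exp(−tA)y)‖ for all t ∈ [0,T]. Let v be the orthogonal projection of e_c onto N_y = (ℝ∙Ay)ᗮ. Then ‖v‖ ≥ (1+α²)^{−1/2} > 0, and for every t ∈ [0,T]: ‖ψ*_{−t}(y)v‖ ≥ C⁻²·(1+α²)⁻¹·exp((λ_u − λ_c)·t). Consequently, since λ_u − λ_c > 0, the scaled linear Poincaré flow admits a normal vector at y that is exponentially expanded under ψ*_{−t}, so no subsegment of such an orbit segment is backward contracting (linear-model form of Case 2 of Lemma 3.8). -/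
/-!
Write `z_t = A φ_{-t}(y) = φ_{-t}(A y)` for the flow direction and `W = Ess ⊕ Ec`, so that
`Eu = Wᗮ`. Since `e_c ∈ W` and `z_t` lies in the `α`-cone around `Wᗮ`, the angle between `e_c`
and the line `ℝ z_t` is bounded below: `‖π_{z_t} e_c‖ ≥ (1 + α²)^{-1/2}`. As `e_c` is an
eigenvector of `A`, `φ_{-t}` maps `v = π_{A y} e_c` to `e^{-tμ} e_c` plus a multiple of `z_t`,
so `ψ*_{-t}(y) v = (‖A y‖ / ‖z_t‖) e^{-tμ} π_{z_t} e_c`. The centre factor is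
`e^{-tμ} ≥ C⁻¹ e^{-λ_c t}`, and since `A y = φ_t(z_t)` while `φ_t` commutes with the projection
onto `Eu`, `‖A y‖ ≥ ‖φ_t P_{Eu} z_t‖ ≥ C⁻¹ e^{λ_u t} ‖P_{Eu} z_t‖ ≥ C⁻¹ e^{λ_u t} (1 + α²)^{-1/2} ‖z_t‖`.
-/

open NormedSpace

open scoped Nat

section Exp

variable {E : Type*} [NormedAddCommGroup E] [NormedSpace ℝ E]

theorem apply_exp_smul_apply (B : E →L[ℝ] E) (s : ℝ) (x : E) :
    B (exp (s • B) x) = exp (s • B) (B x) :=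
  DFunLike.congr_fun ((Commute.refl B).smul_right s).exp_right.eq x

variable [CompleteSpace E]

theorem hasSum_exp_apply (B : E →L[ℝ] E) (x : E) :
    HasSum (fun n : ℕ => (n !⁻¹ : ℝ) • (B ^ n) x) (exp B x) :=
  (exp_series_hasSum_exp' (𝕂 := ℝ) B).mapL (ContinuousLinearMap.apply ℝ E x)

theorem exp_smul_apply_mem {S : Submodule ℝ E} (hS : IsClosed (S : Set E)) {B : E →L[ℝ] E}
    (hB : ∀ x ∈ S, B x ∈ S) (s : ℝ) {x : E} (hx : x ∈ S) : exp (s • B) x ∈ S := by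
  have hpow : ∀ n : ℕ, ((s • B) ^ n) x ∈ S := by
    intro n
    induction n with
    | zero => simpa using hx
    | succ n ih => rw [pow_succ']; exact S.smul_mem s (hB _ ih)
  exact hS.mem_of_tendsto (hasSum_exp_apply _ x).tendsto_sum_nat <|
    .of_forall fun n => S.sum_mem fun k _ => S.smul_mem _ (hpow k)

theorem exp_smul_apply_of_apply_eq_smul {B : E →L[ℝ] E} {e : E} {μ : ℝ} (he : B e = μ • e)
    (s : ℝ) : exp (s • B) e = Real.exp (s * μ) • e := by
  have hpow : ∀ n : ℕ, ((s • B) ^ n) e = (s * μ) ^ n • e := by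
    intro n
    induction n with
    | zero => simp
    | succ n ih =>
      rw [pow_succ', mul_apply_eq_comp, ih, map_smul, smul_apply, he, smul_smul, smul_smul,
        pow_succ']
      ring_nf
  refine (hasSum_exp_apply _ e).unique ?_
  simp_rw [hpow, smul_smul, Real.exp_eq_exp_ℝ]
  exact (exp_series_hasSum_exp' (𝕂 := ℝ) (s * μ)).smul_const e

theorem inv_le_exp_neg_mul_of_norm_exp_smul_apply_le {B : E →L[ℝ] E} {e : E} {μ c t : ℝ}
    (he : B e = μ • e) (he₀ : e ≠ 0) (h : ‖exp (t • B) e‖ ≤ c * ‖e‖) :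
    c⁻¹ ≤ Real.exp (-t * μ) := by
  rw [exp_smul_apply_of_apply_eq_smul he, norm_smul, Real.norm_of_nonneg (Real.exp_pos _).le] at h
  rw [neg_mul, Real.exp_neg]
  exact inv_anti₀ (Real.exp_pos _) (le_of_mul_le_mul_right h (norm_pos_iff.mpr he₀))

theorem exp_smul_apply_exp_neg_smul_apply (B : E →L[ℝ] E) (s : ℝ) (x : E) :
    exp (s • B) (exp ((-s) • B) x) = x := by
  have hball : ∀ C : E →L[ℝ] E, C ∈ Metric.eball 0 (expSeries ℝ (E →L[ℝ] E)).radius := by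
    simp [expSeries_radius_eq_top]
  rw [← mul_apply_eq_comp, ← exp_add_of_commute_of_mem_ball
    (((Commute.refl B).smul_left s).smul_right (-s)) (hball _) (hball _), ← add_smul,
    add_neg_cancel, zero_smul, exp_zero, one_apply_eq_self]

theorem apply_exp_smul_apply_ne_zero {B : E →L[ℝ] E} (hB : Function.Injective B) (s : ℝ) {x : E}
    (hx : x ≠ 0) : B (exp (s • B) x) ≠ 0 := by
  intro h
  have hflow : exp (s • B) x = 0 := hB (h.trans (map_zero B).symm)
  apply hx
  rw [← exp_smul_apply_exp_neg_smul_apply B (-s) x, neg_neg, hflow, map_zero]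

end Exp

namespace Submodule

variable {F : Type*} [NormedAddCommGroup F] [InnerProductSpace ℝ F]

theorem eq_orthogonal_of_le_of_sup_eq_top {K L : Submodule ℝ F} [K.HasOrthogonalProjection]
    (hL : L ≤ Kᗮ) (hsup : K ⊔ L = ⊤) : L = Kᗮ :=
  (le_iff_eq_of_codisjoint_of_disjoint (codisjoint_iff.mpr (sup_comm K L ▸ hsup))
    K.orthogonal_disjoint).mp hL

theorem norm_starProjection_singleton_mul_norm (z e : F) :
    ‖(ℝ ∙ z).starProjection e‖ * ‖z‖ = |inner ℝ z e| := by
  rcases eq_or_ne z 0 with rfl | hz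
  · simp
  rw [starProjection_singleton, norm_smul, Real.norm_eq_abs, abs_div, RCLike.ofReal_real_eq_id,
    id, abs_of_nonneg (sq_nonneg ‖z‖)]
  field_simp [norm_ne_zero_iff.mpr hz]

/-- For a unit vector `e ∈ K`, the sine of the angle between `e` and the line `ℝ ∙ z` is at least
the sine of the angle between `z` and `K`. -/
theorem norm_starProjection_orthogonal_mul_norm_le {K : Submodule ℝ F}
    [K.HasOrthogonalProjection] {e : F} (he : e ∈ K) (z : F) :
    ‖Kᗮ.starProjection z‖ * ‖e‖ ≤ ‖(ℝ ∙ z)ᗮ.starProjection e‖ * ‖z‖ := by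
  have hinner : |(inner ℝ z e : ℝ)| ≤ ‖K.starProjection z‖ * ‖e‖ :=
    calc |(inner ℝ z e : ℝ)| = |inner ℝ (K.starProjection z) e| := by
          rw [K.inner_starProjection_left_eq_right, starProjection_eq_self_iff.mpr he]
      _ ≤ ‖K.starProjection z‖ * ‖e‖ := abs_real_inner_le_norm _ _
  have hz := norm_sq_eq_add_norm_sq_starProjection z K
  have he := norm_sq_eq_add_norm_sq_starProjection e (ℝ ∙ z)
  have hline := norm_starProjection_singleton_mul_norm z e
  refine le_of_sq_le_sq ?_ (by positivity)
  nlinarith [abs_nonneg (inner ℝ z e : ℝ), norm_nonneg e, norm_nonneg (K.starProjection z)]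

theorem norm_le_sqrt_mul_norm_starProjection_orthogonal {K : Submodule ℝ F}
    [K.HasOrthogonalProjection] {z : F} {α : ℝ}
    (hcone : ‖K.starProjection z‖ ≤ α * ‖Kᗮ.starProjection z‖) :
    ‖z‖ ≤ √(1 + α ^ 2) * ‖Kᗮ.starProjection z‖ := by
  rw [← Real.sqrt_sq (norm_nonneg (Kᗮ.starProjection z)), ← Real.sqrt_mul (by positivity),
    Real.le_sqrt (norm_nonneg _) (by positivity), norm_sq_eq_add_norm_sq_starProjection z K]
  nlinarith [pow_le_pow_left₀ (norm_nonneg _) hcone 2]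

theorem inv_sqrt_le_norm_starProjection_orthogonal_singleton {K : Submodule ℝ F}
    [K.HasOrthogonalProjection] {e z : F} (he : e ∈ K) (he₁ : ‖e‖ = 1) (hz : z ≠ 0) {α : ℝ}
    (hcone : ‖K.starProjection z‖ ≤ α * ‖Kᗮ.starProjection z‖) :
    (√(1 + α ^ 2))⁻¹ ≤ ‖(ℝ ∙ z)ᗮ.starProjection e‖ := by
  have hangle := norm_starProjection_orthogonal_mul_norm_le he z
  have hnorm := norm_le_sqrt_mul_norm_starProjection_orthogonal hcone
  rw [he₁, mul_one] at hangle
  rw [inv_le_iff_one_le_mul₀' (by positivity)]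
  have hz' : 0 < ‖z‖ := norm_pos_iff.mpr hz
  nlinarith [Real.sqrt_nonneg (1 + α ^ 2)]

theorem apply_starProjection_orthogonal {K : Submodule ℝ F} [K.HasOrthogonalProjection]
    {L : F →L[ℝ] F} (hK : ∀ x ∈ K, L x ∈ K) (hKo : ∀ x ∈ Kᗮ, L x ∈ Kᗮ) (z : F) :
    L (Kᗮ.starProjection z) = Kᗮ.starProjection (L z) := by
  conv_rhs => rw [← K.starProjection_add_starProjection_orthogonal z, map_add, map_add,
    starProjection_orthogonal_apply_eq_zero (hK _ (K.starProjection_apply_mem z)), zero_add,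
    starProjection_eq_self_iff.mpr (hKo _ (Kᗮ.starProjection_apply_mem z))]

theorem inv_sqrt_mul_mul_norm_le_norm_apply {K : Submodule ℝ F} [K.HasOrthogonalProjection]
    {L : F →L[ℝ] F}
    (hK : ∀ x ∈ K, L x ∈ K) (hKo : ∀ x ∈ Kᗮ, L x ∈ Kᗮ) {c : ℝ} (hc : 0 ≤ c)
    (hL : ∀ x ∈ Kᗮ, c * ‖x‖ ≤ ‖L x‖) {z : F} {α : ℝ}
    (hcone : ‖K.starProjection z‖ ≤ α * ‖Kᗮ.starProjection z‖) :
    (√(1 + α ^ 2))⁻¹ * c * ‖z‖ ≤ ‖L z‖ := by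
  have hz : (√(1 + α ^ 2))⁻¹ * ‖z‖ ≤ ‖Kᗮ.starProjection z‖ := by
    rw [inv_mul_le_iff₀ (by positivity)]
    exact norm_le_sqrt_mul_norm_starProjection_orthogonal hcone
  calc (√(1 + α ^ 2))⁻¹ * c * ‖z‖ = c * ((√(1 + α ^ 2))⁻¹ * ‖z‖) := by ring
    _ ≤ c * ‖Kᗮ.starProjection z‖ := by gcongr
    _ ≤ ‖L (Kᗮ.starProjection z)‖ := hL _ (Kᗮ.starProjection_apply_mem z)
    _ = ‖Kᗮ.starProjection (L z)‖ := by rw [apply_starProjection_orthogonal hK hKo]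
    _ ≤ ‖L z‖ := Kᗮ.norm_starProjection_apply_le (L z)

end Submodule

theorem norm_scaledLPF_starProjection_of_apply_eq_smul {d : ℕ}
    {A : EuclideanSpace ℝ (Fin d) →L[ℝ] EuclideanSpace ℝ (Fin d)} {e : EuclideanSpace ℝ (Fin d)}
    {μ : ℝ} (he : A e = μ • e) (s : ℝ) (y : EuclideanSpace ℝ (Fin d)) :
    ‖scaledLPF A s y ((ℝ ∙ A y)ᗮ.starProjection e)‖ =
      ‖A y‖ / ‖A (exp (s • A) y)‖ * Real.exp (s * μ) *
        ‖(ℝ ∙ A (exp (s • A) y))ᗮ.starProjection e‖ := by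
  obtain ⟨c, hc⟩ := Submodule.mem_span_singleton.mp ((ℝ ∙ A y).starProjection_apply_mem e)
  have hflow : exp (s • A) ((ℝ ∙ A y)ᗮ.starProjection e) =
      Real.exp (s * μ) • e - c • A (exp (s • A) y) := by
    rw [Submodule.starProjection_orthogonal_val, ← hc, map_sub, map_smul,
      exp_smul_apply_of_apply_eq_smul he, apply_exp_smul_apply]
  rw [scaledLPF, Submodule.coe_orthogonalProjectionOnto_apply, hflow, map_sub, map_smul, map_smul,
    Submodule.starProjection_orthogonalComplement_singleton_eq_zero, smul_zero, sub_zero,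
    norm_smul, norm_smul, Real.norm_of_nonneg (by positivity), Real.norm_of_nonneg (by positivity),
    mul_assoc]

theorem scaledLPF_expands_center_in_unstable_cone_general {d : ℕ}
    (A : EuclideanSpace ℝ (Fin d) →L[ℝ] EuclideanSpace ℝ (Fin d))
    (hA : Function.Bijective A)
    (Ess Ec Eu : Submodule ℝ (EuclideanSpace ℝ (Fin d)))
    (e_c : EuclideanSpace ℝ (Fin d)) (hec : ‖e_c‖ = 1) (hEc : Ec = ℝ ∙ e_c)
    (horth₂ : Eu ≤ Essᗮ) (horth₃ : Eu ≤ Ecᗮ)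
    (hsum : Ess ⊔ Ec ⊔ Eu = ⊤)
    (hinvss : ∀ v ∈ Ess, A v ∈ Ess) (hinvc : ∀ v ∈ Ec, A v ∈ Ec)
    (hinvu : ∀ v ∈ Eu, A v ∈ Eu)
    (C lamC lamU : ℝ) (hC : 1 ≤ C)
    (hc : ∀ v ∈ Ec, ∀ t : ℝ, 0 ≤ t →
      C⁻¹ * Real.exp (lamC * t) * ‖v‖ ≤ ‖exp (t • A) v‖ ∧
      ‖exp (t • A) v‖ ≤ C * Real.exp (lamC * t) * ‖v‖)
    (hu : ∀ v ∈ Eu, ∀ t : ℝ, 0 ≤ t →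
      C⁻¹ * Real.exp (lamU * t) * ‖v‖ ≤ ‖exp (t • A) v‖)
    (α : ℝ)
    (y : EuclideanSpace ℝ (Fin d)) (hy : y ≠ 0)
    (T : ℝ) (hT : 0 < T)
    (hdir : ∀ t ∈ Set.Icc (0 : ℝ) T,
      ‖(Submodule.orthogonalProjectionOnto (Ess ⊔ Ec) (A (exp ((-t) • A) y)) :
          EuclideanSpace ℝ (Fin d))‖ ≤
        α * ‖(Submodule.orthogonalProjectionOnto Eu (A (exp ((-t) • A) y)) :
          EuclideanSpace ℝ (Fin d))‖) :
    (Real.sqrt (1 + α ^ 2))⁻¹ ≤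
      ‖(Submodule.orthogonalProjectionOnto (ℝ ∙ (A y))ᗮ e_c : EuclideanSpace ℝ (Fin d))‖ ∧
    ∀ t ∈ Set.Icc (0 : ℝ) T,
      C⁻¹ ^ 2 * (1 + α ^ 2)⁻¹ * Real.exp ((lamU - lamC) * t) ≤
        ‖scaledLPF A (-t) y
          (Submodule.orthogonalProjectionOnto (ℝ ∙ (A y))ᗮ e_c : EuclideanSpace ℝ (Fin d))‖ := by
  set W := Ess ⊔ Ec
  obtain rfl : Eu = Wᗮ := Submodule.eq_orthogonal_of_le_of_sup_eq_top
    (Submodule.inf_orthogonal Ess Ec ▸ le_inf horth₂ horth₃) hsum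
  simp only [Submodule.coe_orthogonalProjectionOnto_apply] at hdir ⊢
  have hec_mem : e_c ∈ Ec := hEc ▸ Submodule.mem_span_singleton_self e_c
  obtain ⟨μ, hμ⟩ : ∃ μ : ℝ, μ • e_c = A e_c :=
    Submodule.mem_span_singleton.mp (hEc ▸ hinvc e_c hec_mem)
  have hinvW : ∀ x ∈ W, A x ∈ W :=
    (Module.End.invtSubmodule A.toLinearMap).supClosed (a := Ess) (b := Ec) hinvss hinvc
  have hflow_ne : ∀ t : ℝ, A (exp ((-t) • A) y) ≠ 0 := fun t =>
    apply_exp_smul_apply_ne_zero hA.injective (-t) hy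
  have hangle : ∀ t ∈ Set.Icc 0 T,
      (√(1 + α ^ 2))⁻¹ ≤ ‖(ℝ ∙ A (exp ((-t) • A) y))ᗮ.starProjection e_c‖ := fun t ht =>
    Submodule.inv_sqrt_le_norm_starProjection_orthogonal_singleton
      (Submodule.mem_sup_right hec_mem) hec (hflow_ne t) (hdir t ht)
  refine ⟨?_, fun t ht => ?_⟩
  · have h := hangle 0 ⟨le_rfl, hT.le⟩
    have h0 : (-0 : ℝ) • A = 0 := by rw [neg_zero]; exact zero_smul ℝ A
    rwa [h0, exp_zero, one_apply_eq_self] at h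
  rw [norm_scaledLPF_starProjection_of_apply_eq_smul hμ.symm]
  set z := A (exp ((-t) • A) y)
  have hcenter : (C * Real.exp (lamC * t))⁻¹ ≤ Real.exp (-t * μ) :=
    inv_le_exp_neg_mul_of_norm_exp_smul_apply_le hμ.symm (norm_ne_zero_iff.mp (hec ▸ one_ne_zero))
      (hc e_c hec_mem t ht.1).2
  have hunstable : (√(1 + α ^ 2))⁻¹ * (C⁻¹ * Real.exp (lamU * t)) ≤ ‖A y‖ / ‖z‖ := by
    have hz : exp (t • A) z = A y := by
      rw [← apply_exp_smul_apply, exp_smul_apply_exp_neg_smul_apply]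
    rw [le_div_iff₀ (norm_pos_iff.mpr (hflow_ne t)), ← hz]
    exact Submodule.inv_sqrt_mul_mul_norm_le_norm_apply
      (fun x hx => exp_smul_apply_mem (Submodule.closed_of_finiteDimensional W) hinvW t hx)
      (fun x hx => exp_smul_apply_mem (Submodule.isClosed_orthogonal W) hinvu t hx)
      (by positivity) (fun x hx => hu x hx t ht.1) (hdir t ht)
  calc C⁻¹ ^ 2 * (1 + α ^ 2)⁻¹ * Real.exp ((lamU - lamC) * t)
      = (√(1 + α ^ 2))⁻¹ * (C⁻¹ * Real.exp (lamU * t)) * (C * Real.exp (lamC * t))⁻¹ *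
          (√(1 + α ^ 2))⁻¹ := by
        have hsq : (√(1 + α ^ 2))⁻¹ * (√(1 + α ^ 2))⁻¹ = (1 + α ^ 2)⁻¹ := by
          rw [← mul_inv, Real.mul_self_sqrt (by positivity)]
        rw [← hsq, sub_mul, Real.exp_sub]
        ring
    _ ≤ ‖A y‖ / ‖z‖ * Real.exp (-t * μ) * ‖(ℝ ∙ z)ᗮ.starProjection e_c‖ := by
        gcongr
        exact hangle t ht

/-- Linear-model form of Case 2 of Lemma 3.8: near a Lorenz-like singularity with
orthogonal `A`-invariant splitting `E = Ess ⊕ Ec ⊕ Eu`, `dim Ec = 1` spanned by the unit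
vector `e_c`, and rates `λ_c < 0 < λ_u` on `Ec`, `Eu`, if the flow direction stays in the
`α`-cone of `Eu` along the backward orbit segment of `y` of length `T`, then the
projection `v` of `e_c` to `N_y = (ℝ∙Ay)ᗮ` satisfies `‖v‖ ≥ (1+α²)^{-1/2}` and is
exponentially expanded by the backward scaled linear Poincaré flow:
`‖ψ*_{−t}(y) v‖ ≥ C⁻²·(1+α²)⁻¹·exp((λ_u − λ_c)·t)` for all `t ∈ [0,T]`; since
`λ_u − λ_c > 0`, no subsegment of such an orbit segment is backward contracting. -/
theorem scaledLPF_expands_center_in_unstable_cone {d : ℕ}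
    (A : EuclideanSpace ℝ (Fin d) →L[ℝ] EuclideanSpace ℝ (Fin d))
    (hA : Function.Bijective A)
    (Ess Ec Eu : Submodule ℝ (EuclideanSpace ℝ (Fin d)))
    (e_c : EuclideanSpace ℝ (Fin d)) (hec : ‖e_c‖ = 1) (hEc : Ec = ℝ ∙ e_c)
    (horth₁ : Ec ≤ Essᗮ) (horth₂ : Eu ≤ Essᗮ) (horth₃ : Eu ≤ Ecᗮ)
    (hsum : Ess ⊔ Ec ⊔ Eu = ⊤)
    (hinvss : ∀ v ∈ Ess, A v ∈ Ess) (hinvc : ∀ v ∈ Ec, A v ∈ Ec)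
    (hinvu : ∀ v ∈ Eu, A v ∈ Eu)
    (C lamC lamU : ℝ) (hC : 1 ≤ C) (hlamC : lamC < 0) (hlamU : 0 < lamU)
    (hc : ∀ v ∈ Ec, ∀ t : ℝ, 0 ≤ t →
      C⁻¹ * Real.exp (lamC * t) * ‖v‖ ≤ ‖exp (t • A) v‖ ∧
      ‖exp (t • A) v‖ ≤ C * Real.exp (lamC * t) * ‖v‖)
    (hu : ∀ v ∈ Eu, ∀ t : ℝ, 0 ≤ t →
      C⁻¹ * Real.exp (lamU * t) * ‖v‖ ≤ ‖exp (t • A) v‖)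
    (α : ℝ) (hα : α ∈ Set.Ioo (0 : ℝ) 1)
    (y : EuclideanSpace ℝ (Fin d)) (hy : y ≠ 0)
    (T : ℝ) (hT : 0 < T)
    (hdir : ∀ t ∈ Set.Icc (0 : ℝ) T,
      ‖(Submodule.orthogonalProjectionOnto (Ess ⊔ Ec) (A (exp ((-t) • A) y)) :
          EuclideanSpace ℝ (Fin d))‖ ≤
        α * ‖(Submodule.orthogonalProjectionOnto Eu (A (exp ((-t) • A) y)) :
          EuclideanSpace ℝ (Fin d))‖) :
    (Real.sqrt (1 + α ^ 2))⁻¹ ≤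
      ‖(Submodule.orthogonalProjectionOnto (ℝ ∙ (A y))ᗮ e_c : EuclideanSpace ℝ (Fin d))‖ ∧
    ∀ t ∈ Set.Icc (0 : ℝ) T,
      C⁻¹ ^ 2 * (1 + α ^ 2)⁻¹ * Real.exp ((lamU - lamC) * t) ≤
        ‖scaledLPF A (-t) y
          (Submodule.orthogonalProjectionOnto (ℝ ∙ (A y))ᗮ e_c : EuclideanSpace ℝ (Fin d))‖ :=
  scaledLPF_expands_center_in_unstable_cone_general A hA Ess Ec Eu e_c hec hEc horth₂ horth₃ hsum
    hinvss hinvc hinvu C lamC lamU hC hc hu α y hy T hT hdir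
end

section
/- Let x₀ ∈ E₁, y₀ ∈ E₂ and ρ, R > 0, let g : closedBall(x₀, ρ) ⊆ E₁ → E₂ be β'-Lipschitz and h : closedBall(y₀, R) ⊆ E₂ → E₁ be β-Lipschitz with β·β' < 1. If ‖g(x₀) − y₀‖ + β'·ρ ≤ R and ‖h(g(x₀)) − x₀‖ ≤ (1 − β·β')·ρ, then graph(g) and graph(h) intersect in exactly one point; equivalently, the map x ↦ h(g(x)) is well defined on closedBall(x₀, ρ) and has a unique fixed point there. (This is the geometric mechanism behind the transverse intersections in Lemmas 3.5 and 3.11: two Lipschitz disks of complementary dimensions, tangent to transverse cones and of sufficiently large diameter, must intersect.) -/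
/-!
A point lies on both graphs exactly when it is `x + g x` with `h (g x) = x`, because the
decomposition along `E₁ ⊕ E₁ᗮ` is unique. The size conditions make `g` map the disk
`closedBall x₀ ρ ∩ E₁` into the domain of `h`, and make `h ∘ g`, which is `β β'`-Lipschitz,
map that disk into itself; the Banach fixed-point theorem then gives exactly one fixed point.
-/

open Set Metric NNReal Function

theorem Submodule.eq_and_eq_of_add_eq_add_of_disjoint {R M : Type*} [Ring R] [AddCommGroup M]
    [Module R M] {p q : Submodule R M} (hpq : Disjoint p q) {a a' b b' : M} (ha : a ∈ p)
    (ha' : a' ∈ p) (hb : b ∈ q) (hb' : b' ∈ q) (h : a + b = a' + b') : a = a' ∧ b = b' := by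
  have hdiff : a - a' = b' - b := by linear_combination (norm := abel) h
  have hzero : a - a' = 0 :=
    Submodule.disjoint_def.1 hpq _ (p.sub_mem ha ha') (hdiff ▸ q.sub_mem hb' hb)
  exact ⟨sub_eq_zero.1 hzero, (sub_eq_zero.1 (hdiff ▸ hzero)).symm⟩

theorem existsUnique_graph_inter_of_existsUnique_isFixedPt {R M : Type*} [Ring R]
    [AddCommGroup M] [Module R M] {p q : Submodule R M} (hpq : Disjoint p q) {S T : Set M}
    (hS : S ⊆ p) (hT : T ⊆ q) {g h : M → M} (hg : MapsTo g S T) (hh : MapsTo h T p)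
    (hfix : ∃! x, x ∈ S ∧ IsFixedPt (h ∘ g) x) :
    ∃! z, (∃ x ∈ S, z = x + g x) ∧ (∃ y ∈ T, z = h y + y) := by
  obtain ⟨x, ⟨hxS, hx⟩, huniq⟩ := hfix
  refine ⟨x + g x, ⟨⟨x, hxS, rfl⟩, ⟨g x, hg hxS, by rw [← comp_apply (f := h), hx.eq]⟩⟩,
    ?_⟩
  rintro z ⟨⟨x', hx'S, rfl⟩, ⟨y, hyT, hz⟩⟩
  obtain ⟨hx'y, hgx'y⟩ := Submodule.eq_and_eq_of_add_eq_add_of_disjoint hpq (hS hx'S)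
    (hh hyT) (hT (hg hx'S)) (hT hyT) hz
  have hx'fix : IsFixedPt (h ∘ g) x' := by
    simp only [IsFixedPt, comp_apply, hgx'y, ← hx'y]
  rw [huniq x' ⟨hx'S, hx'fix⟩]

theorem LipschitzOnWith.mapsTo_closedBall {X Y : Type*} [PseudoMetricSpace X]
    [PseudoMetricSpace Y] {f : X → Y} {K : ℝ≥0} {s : Set X} {x₀ : X} {r : ℝ}
    (hf : LipschitzOnWith K f s) (hs : s ⊆ closedBall x₀ r) (hx₀ : x₀ ∈ s) (y₀ : Y) :
    MapsTo f s (closedBall y₀ (dist (f x₀) y₀ + K * r)) := fun x hx =>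
  calc dist (f x) y₀ ≤ dist (f x) (f x₀) + dist (f x₀) y₀ := dist_triangle _ _ _
    _ ≤ K * r + dist (f x₀) y₀ := by
        gcongr
        exact (hf.dist_le_mul x hx x₀ hx₀).trans
          (mul_le_mul_of_nonneg_left (mem_closedBall.1 (hs hx)) K.2)
    _ = dist (f x₀) y₀ + K * r := add_comm _ _

theorem LipschitzOnWith.existsUnique_isFixedPt {X : Type*} [MetricSpace X] {f : X → X}
    {K : ℝ≥0} {s : Set X} (hf : LipschitzOnWith K f s) (hK : K < 1) (hsf : MapsTo f s s)
    (hsc : IsComplete s) (hs : s.Nonempty) : ∃! x, x ∈ s ∧ IsFixedPt f x := by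
  obtain ⟨x₀, hx₀⟩ := hs
  obtain ⟨x, hx, hfx, -⟩ := ContractingWith.exists_fixedPoint' hsc hsf
    ⟨hK, hf.mapsToRestrict hsf⟩ hx₀ (edist_ne_top _ _)
  refine ⟨x, ⟨hx, hfx⟩, fun y ⟨hy, hfy⟩ => ?_⟩
  have hle : dist y x ≤ K * dist y x := by
    simpa only [hfy.eq, hfx.eq] using hf.dist_le_mul y hy x hx
  have hK' : (K : ℝ) < 1 := hK
  exact dist_le_zero.1 (by nlinarith [dist_nonneg (x := y) (y := x)])

theorem lipschitz_graphs_intersect_general {d : ℕ}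
    (E₁ : Submodule ℝ (EuclideanSpace ℝ (Fin d)))
    (x₀ y₀ : EuclideanSpace ℝ (Fin d)) (hx₀ : x₀ ∈ E₁)
    (ρ R : ℝ) (hρ : 0 < ρ)
    (β β' : ℝ) (hβ : 0 ≤ β) (hβ' : 0 ≤ β') (hββ' : β * β' < 1)
    (g h : EuclideanSpace ℝ (Fin d) → EuclideanSpace ℝ (Fin d))
    (hgE₂ : ∀ x, g x ∈ E₁ᗮ) (hhE₁ : ∀ y, h y ∈ E₁)
    (hgLip : LipschitzOnWith (Real.toNNReal β') g
      (Metric.closedBall x₀ ρ ∩ (E₁ : Set (EuclideanSpace ℝ (Fin d)))))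
    (hhLip : LipschitzOnWith (Real.toNNReal β) h
      (Metric.closedBall y₀ R ∩ (E₁ᗮ : Set (EuclideanSpace ℝ (Fin d)))))
    (hsize₁ : ‖g x₀ - y₀‖ + β' * ρ ≤ R)
    (hsize₂ : ‖h (g x₀) - x₀‖ ≤ (1 - β * β') * ρ) :
    ∃! z : EuclideanSpace ℝ (Fin d),
      (∃ x ∈ Metric.closedBall x₀ ρ ∩ (E₁ : Set (EuclideanSpace ℝ (Fin d))),
        z = x + g x) ∧
      (∃ y ∈ Metric.closedBall y₀ R ∩ (E₁ᗮ : Set (EuclideanSpace ℝ (Fin d))),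
        z = h y + y) := by
  lift β to ℝ≥0 using hβ
  lift β' to ℝ≥0 using hβ'
  rw [Real.toNNReal_coe] at hgLip hhLip
  set D := closedBall x₀ ρ ∩ (E₁ : Set (EuclideanSpace ℝ (Fin d)))
  have hx₀D : x₀ ∈ D := ⟨mem_closedBall_self hρ.le, hx₀⟩
  have hg : MapsTo g D (closedBall y₀ R ∩ E₁ᗮ) := mapsTo_inter.2
    ⟨(hgLip.mapsTo_closedBall inter_subset_left hx₀D y₀).mono_right
      (closedBall_subset_closedBall (by rwa [dist_eq_norm])), fun x _ => hgE₂ x⟩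
  have hhg : LipschitzOnWith (β * β') (h ∘ g) D := hhLip.comp hgLip hg
  have hhgD : MapsTo (h ∘ g) D D := mapsTo_inter.2
    ⟨(hhg.mapsTo_closedBall inter_subset_left hx₀D x₀).mono_right
      (closedBall_subset_closedBall (by rw [dist_eq_norm, comp_apply]; push_cast; linarith)),
      fun x _ => hhE₁ _⟩
  refine existsUnique_graph_inter_of_existsUnique_isFixedPt E₁.orthogonal_disjoint
    inter_subset_right inter_subset_right hg (fun y _ => hhE₁ y) ?_
  exact hhg.existsUnique_isFixedPt (by exact_mod_cast hββ') hhgD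
    (isClosed_closedBall.inter E₁.closed_of_finiteDimensional).isComplete ⟨x₀, hx₀D⟩

/-- Two Lipschitz graphs of complementary dimensions over an orthogonal splitting
`E = E₁ ⊕ E₂` (`E₂ = E₁ᗮ`), with Lipschitz constants `β'`, `β` satisfying `β·β' < 1` and
compatible size conditions, intersect in exactly one point. Here
`graph g = {x + g x : x ∈ closedBall x₀ ρ ∩ E₁}` and
`graph h = {h y + y : y ∈ closedBall y₀ R ∩ E₂}`. This is the geometric mechanism behind
the transverse intersections in Lemmas 3.5 and 3.11. -/
theorem lipschitz_graphs_intersect {d : ℕ}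
    (E₁ : Submodule ℝ (EuclideanSpace ℝ (Fin d)))
    (x₀ y₀ : EuclideanSpace ℝ (Fin d)) (hx₀ : x₀ ∈ E₁) (hy₀ : y₀ ∈ E₁ᗮ)
    (ρ R : ℝ) (hρ : 0 < ρ) (hR : 0 < R)
    (β β' : ℝ) (hβ : 0 ≤ β) (hβ' : 0 ≤ β') (hββ' : β * β' < 1)
    (g h : EuclideanSpace ℝ (Fin d) → EuclideanSpace ℝ (Fin d))
    (hgE₂ : ∀ x, g x ∈ E₁ᗮ) (hhE₁ : ∀ y, h y ∈ E₁)
    (hgLip : LipschitzOnWith (Real.toNNReal β') g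
      (Metric.closedBall x₀ ρ ∩ (E₁ : Set (EuclideanSpace ℝ (Fin d)))))
    (hhLip : LipschitzOnWith (Real.toNNReal β) h
      (Metric.closedBall y₀ R ∩ (E₁ᗮ : Set (EuclideanSpace ℝ (Fin d)))))
    (hsize₁ : ‖g x₀ - y₀‖ + β' * ρ ≤ R)
    (hsize₂ : ‖h (g x₀) - x₀‖ ≤ (1 - β * β') * ρ) :
    ∃! z : EuclideanSpace ℝ (Fin d),
      (∃ x ∈ Metric.closedBall x₀ ρ ∩ (E₁ : Set (EuclideanSpace ℝ (Fin d))),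
        z = x + g x) ∧
      (∃ y ∈ Metric.closedBall y₀ R ∩ (E₁ᗮ : Set (EuclideanSpace ℝ (Fin d))),
        z = h y + y) :=
  lipschitz_graphs_intersect_general E₁ x₀ y₀ hx₀ ρ R hρ β β' hβ hβ' hββ' g h hgE₂ hhE₁ hgLip hhLip
    hsize₁ hsize₂
end

section
/- Let w ∈ E ∖ {0} satisfy ‖exp(tA)w‖ ≤ C·exp(a·t)·‖w‖ for all t ≥ 0 (for instance, w in the stable subspace of a hyperbolic linear vector field A). Then for every δ with 0 < δ ≤ ‖w‖: log(‖w‖/δ)/‖A‖ ≤ Leb{t ≥ 0 : ‖exp(tA)w‖ ≥ δ} ≤ log(C·‖w‖/δ)/(−a). (Transit times between two spheres inside the stable cone are comparable to the logarithm of the ratio of the flow speeds at the endpoints, as used in the proof of Lemma 3.4.) -/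
/-!
Along the flow, `w = exp(-tA) (exp(tA) w)` and `‖exp(-tA)‖ ≤ exp(t‖A‖)`, so
`‖exp(tA) w‖ ≥ ‖w‖ e^{-t‖A‖}`: the orbit stays outside the `δ`-ball at least until
`t = log(‖w‖/δ)/‖A‖`. Conversely the decay bound `‖exp(tA) w‖ ≤ C e^{at} ‖w‖` forces
it inside the `δ`-ball from `t = log(C‖w‖/δ)/(-a)` on. Comparing the transit set with these
two intervals gives both bounds on its Lebesgue measure.
-/

open MeasureTheory Set

namespace NormedSpace

variable {𝔸 : Type*} [NormedRing 𝔸] [NormedAlgebra ℝ 𝔸]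

theorem norm_exp_le_exp_norm [NormOneClass 𝔸] (x : 𝔸) : ‖exp x‖ ≤ Real.exp ‖x‖ := by
  rw [exp_eq_tsum ℝ, Real.exp_eq_exp_ℝ, exp_eq_tsum_div]
  refine (norm_tsum_le_tsum_norm (norm_expSeries_summable' x)).trans <|
    (norm_expSeries_summable' x).tsum_le_tsum (fun n => ?_) (Real.summable_pow_div_factorial ‖x‖)
  rw [norm_smul, norm_inv, Real.norm_natCast, inv_mul_eq_div]
  gcongr
  exact norm_pow_le x n

theorem exp_neg_mul_exp [CompleteSpace 𝔸] (x : 𝔸) : exp (-x) * exp x = 1 := by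
  have mem_ball (y : 𝔸) : y ∈ Metric.eball (0 : 𝔸) (expSeries ℝ 𝔸).radius := by
    simp [expSeries_radius_eq_top]
  rw [← exp_add_of_commute_of_mem_ball (Commute.refl x).neg_left (mem_ball _) (mem_ball _),
    neg_add_cancel, exp_zero]

end NormedSpace

namespace ContinuousLinearMap

variable {E : Type*} [NormedAddCommGroup E] [NormedSpace ℝ E] [CompleteSpace E]

theorem norm_le_exp_norm_mul_norm_exp_apply (B : E →L[ℝ] E) (v : E) :
    ‖v‖ ≤ Real.exp ‖B‖ * ‖NormedSpace.exp B v‖ := by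
  -- `NormOneClass (E →L[ℝ] E)`, needed for `norm_exp_le_exp_norm`, holds only for nontrivial `E`.
  rcases subsingleton_or_nontrivial E with _ | _
  · simp [Subsingleton.elim v 0]
  have hv : NormedSpace.exp (-B) (NormedSpace.exp B v) = v := by
    simpa using DFunLike.congr_fun (NormedSpace.exp_neg_mul_exp B) v
  calc ‖v‖ = ‖NormedSpace.exp (-B) (NormedSpace.exp B v)‖ := by rw [hv]
    _ ≤ ‖NormedSpace.exp (-B)‖ * ‖NormedSpace.exp B v‖ := le_opNorm _ _
    _ ≤ Real.exp ‖B‖ * ‖NormedSpace.exp B v‖ := by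
      grw [NormedSpace.norm_exp_le_exp_norm, norm_neg]

end ContinuousLinearMap

theorem Icc_log_div_subset_of_le_exp_mul {f : ℝ → ℝ} {m k δ : ℝ} (hm : 0 < m) (hδ : 0 < δ)
    (hk : 0 < k) (hf : ∀ t, 0 ≤ t → m ≤ Real.exp (k * t) * f t) :
    Icc 0 (Real.log (m / δ) / k) ⊆ {t | 0 ≤ t ∧ δ ≤ f t} := by
  rintro t ⟨ht, htk⟩
  have hexp : Real.exp (k * t) ≤ m / δ := by
    rw [← Real.le_log_iff_exp_le (by positivity), mul_comm]
    exact (le_div_iff₀ hk).mp htk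
  refine ⟨ht, le_of_mul_le_mul_left ?_ (Real.exp_pos (k * t))⟩
  calc Real.exp (k * t) * δ ≤ m := (le_div_iff₀ hδ).mp hexp
    _ ≤ Real.exp (k * t) * f t := hf t ht

theorem subset_Icc_log_div_of_le_mul_exp {f : ℝ → ℝ} {K a δ : ℝ} (ha : a < 0) (hδ : 0 < δ)
    (hf : ∀ t, 0 ≤ t → f t ≤ K * Real.exp (a * t)) :
    {t | 0 ≤ t ∧ δ ≤ f t} ⊆ Icc 0 (Real.log (K / δ) / (-a)) := by
  rintro t ⟨ht, hδt⟩
  have hexp : Real.exp (-a * t) ≤ K / δ := by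
    rw [le_div_iff₀ hδ, neg_mul, Real.exp_neg, inv_mul_le_iff₀ (Real.exp_pos _), mul_comm]
    exact hδt.trans (hf t ht)
  refine ⟨ht, (le_div_iff₀ (neg_pos.mpr ha)).mpr ?_⟩
  rw [mul_comm]
  exact (Real.le_log_iff_exp_le ((Real.exp_pos _).trans_le hexp)).mpr hexp

theorem transit_time_log_comparable_general {d : ℕ}
    (A : EuclideanSpace ℝ (Fin d) →L[ℝ] EuclideanSpace ℝ (Fin d)) (hA : A ≠ 0)
    (C a : ℝ) (ha : a < 0)
    (w : EuclideanSpace ℝ (Fin d)) (hw : w ≠ 0)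
    (hdecay : ∀ t : ℝ, 0 ≤ t →
      ‖NormedSpace.exp (t • A) w‖ ≤ C * Real.exp (a * t) * ‖w‖)
    (δ : ℝ) (hδ : 0 < δ) :
    ENNReal.ofReal (Real.log (‖w‖ / δ) / ‖A‖) ≤
      volume {t : ℝ | 0 ≤ t ∧ δ ≤ ‖NormedSpace.exp (t • A) w‖} ∧
    volume {t : ℝ | 0 ≤ t ∧ δ ≤ ‖NormedSpace.exp (t • A) w‖} ≤
      ENNReal.ofReal (Real.log (C * ‖w‖ / δ) / (-a)) := by
  have growth (t : ℝ) (ht : 0 ≤ t) :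
      ‖w‖ ≤ Real.exp (‖A‖ * t) * ‖NormedSpace.exp (t • A) w‖ := by
    simpa [norm_smul, abs_of_nonneg ht, mul_comm] using
      (t • A).norm_le_exp_norm_mul_norm_exp_apply w
  have decay (t : ℝ) (ht : 0 ≤ t) :
      ‖NormedSpace.exp (t • A) w‖ ≤ C * ‖w‖ * Real.exp (a * t) :=
    (hdecay t ht).trans_eq (mul_right_comm _ _ _)
  constructor
  · calc ENNReal.ofReal (Real.log (‖w‖ / δ) / ‖A‖)
        = volume (Icc 0 (Real.log (‖w‖ / δ) / ‖A‖)) := by rw [Real.volume_Icc, sub_zero]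
      _ ≤ _ := measure_mono <|
        Icc_log_div_subset_of_le_exp_mul (norm_pos_iff.mpr hw) hδ (norm_pos_iff.mpr hA) growth
  · calc volume {t : ℝ | 0 ≤ t ∧ δ ≤ ‖NormedSpace.exp (t • A) w‖}
        ≤ volume (Icc 0 (Real.log (C * ‖w‖ / δ) / (-a))) :=
          measure_mono (subset_Icc_log_div_of_le_mul_exp ha hδ decay)
      _ = ENNReal.ofReal (Real.log (C * ‖w‖ / δ) / (-a)) := by rw [Real.volume_Icc, sub_zero]

/-- Transit times between two spheres inside the stable cone are comparable to the
logarithm of the ratio of the flow speeds at the endpoints (as used in the proof of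
Lemma 3.4): if `‖exp(tA) w‖ ≤ C·exp(a·t)·‖w‖` for all `t ≥ 0`, with `C ≥ 1`, `a < 0`,
then for `0 < δ ≤ ‖w‖`,
`log(‖w‖/δ)/‖A‖ ≤ Leb {t ≥ 0 : ‖exp(tA) w‖ ≥ δ} ≤ log(C·‖w‖/δ)/(−a)`. -/
theorem transit_time_log_comparable {d : ℕ}
    (A : EuclideanSpace ℝ (Fin d) →L[ℝ] EuclideanSpace ℝ (Fin d)) (hA : A ≠ 0)
    (C a : ℝ) (hC : 1 ≤ C) (ha : a < 0)
    (w : EuclideanSpace ℝ (Fin d)) (hw : w ≠ 0)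
    (hdecay : ∀ t : ℝ, 0 ≤ t →
      ‖NormedSpace.exp (t • A) w‖ ≤ C * Real.exp (a * t) * ‖w‖)
    (δ : ℝ) (hδ : 0 < δ) (hδw : δ ≤ ‖w‖) :
    ENNReal.ofReal (Real.log (‖w‖ / δ) / ‖A‖) ≤
      volume {t : ℝ | 0 ≤ t ∧ δ ≤ ‖NormedSpace.exp (t • A) w‖} ∧
    volume {t : ℝ | 0 ≤ t ∧ δ ≤ ‖NormedSpace.exp (t • A) w‖} ≤
      ENNReal.ofReal (Real.log (C * ‖w‖ / δ) / (-a)) :=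
  transit_time_log_comparable_general A hA C a ha w hw hdecay δ hδ
end
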